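/- arXiv:1707.03378 — 7 statements merged into one kernel-verified Lean document; each statement's English description precedes it below -/
import Mathlib

section
/- Let N ≥ 2 and let g, g̃ ∈ ℂ^N with all entries nonzero, and f, f̃ ∈ ℂ^N with f_0, f̃_0 real and positive and f_1 ≠ 0. Let T(f) denote the N×N Hermitian Toeplitz matrix whose (m,n) entry is f_{m-n} for m ≥ n and conj(f_{n-m}) for m < n. If diag(g̃) T(f̃) diag(conj(g̃)) = diag(g) T(f) diag(conj(g)), then there exist c₀ > 0 and c₁, c₂ ∈ ℝ such that g̃_n = c₀ e^{i(c₁ + n c₂)} g_n and f̃_n = c₀^{-2} e^{-i n c₂} f_n for all n = 0, …, N−1. -/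
open Complex Matrix

/-- The Hermitian Toeplitz matrix generated by `f`. -/
noncomputable def ToepMat {N : ℕ} (f : Fin N → ℂ) : Matrix (Fin N) (Fin N) ℂ :=
  fun m n =>
    if h : (n : ℕ) ≤ (m : ℕ) then
      f ⟨(m : ℕ) - n, Nat.lt_of_le_of_lt (Nat.sub_le _ _) m.isLt⟩
    else
      starRingEnd ℂ (f ⟨(n : ℕ) - m, Nat.lt_of_le_of_lt (Nat.sub_le _ _) n.isLt⟩)

/-! Writing `h = g̃ / g`, the hypothesis says `T(f) = diag(h) T(f̃) diag(h)ᴴ` entrywise. The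
diagonal gives `|h n|² f̃₀ = f₀ ≠ 0`, so `|h|` is a nonzero constant; the first subdiagonal gives
`h (k+1) conj (h k) f̃₁ = f₁ ≠ 0`, hence `h (k+1) = q h k` for a single `q`, necessarily of modulus
one; and the first column gives `f n = qⁿ |h₀|² f̃ n`. Then `c₀ = |h₀|`, `c₁ = arg h₀`,
`c₂ = arg q`. -/

open ComplexConjugate

section ToepMat

variable {N : ℕ}

theorem ToepMat_apply_of_le (v : Fin N → ℂ) {m n : Fin N} (hnm : (n : ℕ) ≤ m) :
    ToepMat v m n = v ⟨m - n, by omega⟩ := by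
  simp only [ToepMat, dif_pos hnm]

theorem ToepMat_apply_self (v : Fin N → ℂ) (n : Fin N) : ToepMat v n n = v ⟨0, n.pos⟩ := by
  simp only [ToepMat_apply_of_le v le_rfl, Nat.sub_self]

theorem ToepMat_apply_zero_right (v : Fin N → ℂ) (m : Fin N) : ToepMat v m ⟨0, m.pos⟩ = v m :=
  ToepMat_apply_of_le v (Nat.zero_le _)

theorem ToepMat_apply_succ_self (v : Fin N → ℂ) {k : ℕ} (hk : k + 1 < N) :
    ToepMat v ⟨k + 1, hk⟩ ⟨k, by omega⟩ = v ⟨1, by omega⟩ := by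
  simp only [ToepMat_apply_of_le v (m := ⟨k + 1, hk⟩) (n := ⟨k, by omega⟩) (Nat.le_succ k),
    Nat.add_sub_cancel_left]

end ToepMat

theorem div_mul_apply_mul_conj_div_of_diagonal_congr {ι : Type*} [Fintype ι] [DecidableEq ι]
    {g gt : ι → ℂ} {A A' : Matrix ι ι ℂ} (hg : ∀ i, g i ≠ 0)
    (heq : diagonal gt * A' * diagonal (fun i => conj (gt i)) =
      diagonal g * A * diagonal (fun i => conj (g i))) (i j : ι) :
    gt i / g i * A' i j * conj (gt j / g j) = A i j := by
  have hij := congrFun (congrFun heq i) j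
  simp only [mul_diagonal, diagonal_mul] at hij
  have hgi := hg i
  have hgj : conj (g j) ≠ 0 := (map_ne_zero _).2 (hg j)
  rw [map_div₀]
  field_simp
  linear_combination hij

section DiagonalCongruence

variable {N : ℕ} {h f ft : Fin N → ℂ}

theorem normSq_mul_apply_zero_of_toepMat_congr
    (hrel : ∀ m n, h m * ToepMat ft m n * conj (h n) = ToepMat f m n) (n : Fin N) :
    (normSq (h n) : ℂ) * ft ⟨0, n.pos⟩ = f ⟨0, n.pos⟩ := by
  have hnn := hrel n n
  rw [ToepMat_apply_self, ToepMat_apply_self] at hnn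
  rw [← mul_conj, ← hnn]
  ring

theorem apply_succ_mul_normSq_of_toepMat_congr
    (hrel : ∀ m n, h m * ToepMat ft m n * conj (h n) = ToepMat f m n) (k : ℕ) (hk : k + 1 < N) :
    h ⟨k + 1, hk⟩ * ft ⟨1, by omega⟩ * normSq (h ⟨k, by omega⟩) =
      f ⟨1, by omega⟩ * h ⟨k, by omega⟩ := by
  have hsucc := hrel ⟨k + 1, hk⟩ ⟨k, by omega⟩
  rw [ToepMat_apply_succ_self, ToepMat_apply_succ_self] at hsucc
  rw [← mul_conj, ← hsucc]
  ring

theorem apply_eq_pow_mul_of_succ {q : ℂ}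
    (hq : ∀ k (hk : k + 1 < N), h ⟨k + 1, hk⟩ = q * h ⟨k, by omega⟩) (n : Fin N) :
    h n = q ^ (n : ℕ) * h ⟨0, n.pos⟩ := by
  obtain ⟨n, hn⟩ := n
  induction n with
  | zero => simp
  | succ k ih => rw [hq k hn, ih (by omega), pow_succ]; ring

theorem exists_geometric_of_toepMat_congr (h0 : 0 < N) (h1 : 1 < N)
    (hrel : ∀ m n, h m * ToepMat ft m n * conj (h n) = ToepMat f m n)
    (hf0 : f ⟨0, h0⟩ ≠ 0) (hf1 : f ⟨1, h1⟩ ≠ 0) :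
    h ⟨0, h0⟩ ≠ 0 ∧ ∃ q : ℂ, ‖q‖ = 1 ∧ ∀ n : Fin N,
      h n = q ^ (n : ℕ) * h ⟨0, h0⟩ ∧ f n = q ^ (n : ℕ) * normSq (h ⟨0, h0⟩) * ft n := by
  set r : ℝ := normSq (h ⟨0, h0⟩)
  have hdiag := normSq_mul_apply_zero_of_toepMat_congr hrel
  have hft0 : ft ⟨0, h0⟩ ≠ 0 := right_ne_zero_of_mul (hdiag ⟨0, h0⟩ ▸ hf0)
  have hr : (r : ℂ) ≠ 0 := left_ne_zero_of_mul (hdiag ⟨0, h0⟩ ▸ hf0)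
  have hh0 : h ⟨0, h0⟩ ≠ 0 := fun hh0 => hr (by simp [r, hh0])
  have hnormSq (n : Fin N) : normSq (h n) = r := by
    exact_mod_cast mul_right_cancel₀ hft0 ((hdiag n).trans (hdiag ⟨0, h0⟩).symm)
  have hstep := apply_succ_mul_normSq_of_toepMat_congr hrel
  have hft1 : ft ⟨1, h1⟩ ≠ 0 := by
    intro hft1
    have h01 := hstep 0 h1
    rw [hft1, mul_zero, zero_mul, eq_comm, mul_eq_zero] at h01
    exact h01.elim hf1 hh0
  set q := f ⟨1, h1⟩ / (ft ⟨1, h1⟩ * r)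
  have hgeom : ∀ n : Fin N, h n = q ^ (n : ℕ) * h ⟨0, h0⟩ := by
    refine apply_eq_pow_mul_of_succ fun k hk => ?_
    have hk' := hstep k hk
    rw [hnormSq] at hk'
    rw [div_mul_eq_mul_div, eq_div_iff (mul_ne_zero hft1 hr)]
    linear_combination hk'
  have hnorm (n : Fin N) : ‖h n‖ = ‖h ⟨0, h0⟩‖ := by
    rw [← sq_eq_sq₀ (norm_nonneg _) (norm_nonneg _), ← normSq_eq_norm_sq, ← normSq_eq_norm_sq,
      hnormSq]
  have hq : ‖q‖ = 1 := by
    have hh1 := congrArg norm (hgeom ⟨1, h1⟩)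
    rw [norm_mul, hnorm, pow_one] at hh1
    exact (mul_eq_right₀ (norm_ne_zero_iff.2 hh0)).1 hh1.symm
  refine ⟨hh0, q, hq, fun n => ⟨hgeom n, ?_⟩⟩
  have hcol := hrel n ⟨0, h0⟩
  rw [ToepMat_apply_zero_right, ToepMat_apply_zero_right, hgeom n] at hcol
  rw [← hcol, ← mul_conj]
  ring

end DiagonalCongruence

theorem pow_eq_exp_mul_arg {q : ℂ} (hq : ‖q‖ = 1) (n : ℕ) : q ^ n = exp (I * (n * arg q)) := by
  conv_lhs => rw [← norm_mul_exp_arg_mul_I q, hq, ofReal_one, one_mul, ← exp_nat_mul]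
  ring_nf

theorem stmt0 {N : ℕ} (hN : 2 ≤ N)
    (g gt f ft : Fin N → ℂ)
    (hg : ∀ n, g n ≠ 0)
    (hf0pos : 0 < (f ⟨0, by omega⟩).re)
    (hf1 : f ⟨1, by omega⟩ ≠ 0)
    (heq : Matrix.diagonal gt * ToepMat ft * Matrix.diagonal (fun n => starRingEnd ℂ (gt n)) =
      Matrix.diagonal g * ToepMat f * Matrix.diagonal (fun n => starRingEnd ℂ (g n))) :
    ∃ c₀ : ℝ, 0 < c₀ ∧ ∃ c₁ c₂ : ℝ, ∀ n : Fin N,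
      gt n = (c₀ : ℂ) * Complex.exp (Complex.I * (c₁ + (n : ℕ) * c₂)) * g n ∧
      ft n = (c₀ : ℂ)⁻¹ ^ 2 * Complex.exp (-(Complex.I * ((n : ℕ) * c₂))) * f n := by
  set h : Fin N → ℂ := fun n => gt n / g n
  obtain ⟨hh₀, q, hq, hqh⟩ := exists_geometric_of_toepMat_congr (h := h) (by omega) (by omega)
    (div_mul_apply_mul_conj_div_of_diagonal_congr hg heq) (ne_zero_of_re_pos hf0pos) hf1
  set h₀ := h ⟨0, by omega⟩
  refine ⟨‖h₀‖, norm_pos_iff.2 hh₀, arg h₀, arg q, fun n => ⟨?_, ?_⟩⟩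
  · calc gt n = h n * g n := (div_mul_cancel₀ _ (hg n)).symm
      _ = ‖h₀‖ * exp (I * arg h₀) * exp (I * (n * arg q)) * g n := by
        rw [(hqh n).1, pow_eq_exp_mul_arg hq]
        conv_lhs => rw [← norm_mul_exp_arg_mul_I h₀]
        ring_nf
      _ = _ := by rw [mul_add, Complex.exp_add]; ring
  · rw [(hqh n).2, pow_eq_exp_mul_arg hq, normSq_eq_norm_sq, Complex.exp_neg]
    have hexp := Complex.exp_ne_zero (I * (n * arg q))
    have hnorm : (‖h₀‖ : ℂ) ≠ 0 := ofReal_ne_zero.2 (norm_ne_zero_iff.2 hh₀)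
    push_cast
    field_simp
end

section
/- Let N ≥ 3 and let Φ ∈ ℝ^{N×N} be the matrix with Φ_{0,0} = Φ_{N-1,N-1} = 1/N², rows 1 through N−2 given by the second-difference stencil (row i has entries 1, −2, 1 in columns i−1, i, i+1 and zeros elsewhere), and all other entries of the first and last rows zero. Then Φ is invertible and ‖Φ^{-1}‖_∞ ≤ 3N², where ‖·‖_∞ is the maximum absolute row sum norm, ‖Φ^{-1}‖_∞ = max_i ∑_j |Φ^{-1}_{i,j}|. -/
open Matrix Finset

noncomputable def Psi (N : ℕ) : Matrix (Fin N) (Fin N) ℝ := fun i j =>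
  if (j : ℕ) = 0 then (N:ℝ)^2 * ((N:ℝ) - 1 - ((i:ℕ):ℝ)) / ((N:ℝ) - 1)
  else if (j : ℕ) = N - 1 then (N:ℝ)^2 * ((i:ℕ):ℝ) / ((N:ℝ) - 1)
  else if (i : ℕ) ≤ (j : ℕ) then -(((i:ℕ):ℝ) * ((N:ℝ) - 1 - ((j:ℕ):ℝ))) / ((N:ℝ) - 1)
  else -(((j:ℕ):ℝ) * ((N:ℝ) - 1 - ((i:ℕ):ℝ))) / ((N:ℝ) - 1)

theorem mul_psi {N : ℕ} (hN : 3 ≤ N)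
    (Φ : Matrix (Fin N) (Fin N) ℝ)
    (hΦ : ∀ i j : Fin N,
      Φ i j =
        if (i : ℕ) = 0 then (if (j : ℕ) = 0 then 1 / (N : ℝ)^2 else 0)
        else if (i : ℕ) = N - 1 then (if (j : ℕ) = N - 1 then 1 / (N : ℝ)^2 else 0)
        else if (j : ℕ) + 1 = (i : ℕ) then 1
        else if (j : ℕ) = (i : ℕ) then -2
        else if (j : ℕ) = (i : ℕ) + 1 then 1
        else 0) :
    Φ * Psi N = 1 := by
  have hn3 : (3:ℝ) ≤ (N:ℝ) := by exact_mod_cast hN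
  have hm : (0:ℝ) < (N:ℝ) - 1 := by linarith
  have hm0 : ((N:ℝ) - 1) ≠ 0 := ne_of_gt hm
  have hn0 : ((N:ℝ))^2 ≠ 0 := by positivity
  have hNm1 : ((N - 1 : ℕ) : ℝ) = (N:ℝ) - 1 := by
    have : 1 ≤ N := by omega
    push_cast [this]; ring
  ext i j
  rw [Matrix.mul_apply, Matrix.one_apply]
  by_cases hi0 : (i:ℕ) = 0
  · -- first row
    set z : Fin N := ⟨0, by omega⟩ with hz
    have vz : (z:ℕ) = 0 := rfl
    have hsum : ∀ k : Fin N, Φ i k * Psi N k j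
        = if k = z then (1 / (N:ℝ)^2) * Psi N z j else 0 := by
      intro k
      rw [hΦ, if_pos hi0]
      by_cases hk : (k:ℕ) = 0
      · have hkz : k = z := by apply Fin.ext; rw [vz]; exact hk
        rw [if_pos hk, if_pos hkz, hkz]
      · have hkz : k ≠ z := by
          intro h; apply hk; rw [h, vz]
        rw [if_neg hk, if_neg hkz, zero_mul]
    rw [Finset.sum_congr rfl fun k _ => hsum k, Finset.sum_ite_eq' univ z _,
      if_pos (mem_univ z)]
    have hzv : ((z:ℕ):ℝ) = 0 := by rw [vz]; norm_num
    by_cases hj0 : (j:ℕ) = 0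
    · have hij : i = j := by apply Fin.ext; omega
      rw [if_pos hij]
      simp only [Psi, if_pos hj0, hzv]
      field_simp
      ring
    · rw [if_neg (by intro h; apply hj0; rw [← h, hi0])]
      by_cases hjN : (j:ℕ) = N - 1
      · simp only [Psi, if_neg hj0, if_pos hjN, hzv]
        ring
      · simp only [Psi, if_neg hj0, if_neg hjN,
          if_pos (show (z:ℕ) ≤ (j:ℕ) by rw [vz]; omega), hzv]
        ring
  · by_cases hiN : (i:ℕ) = N - 1
    · -- last row
      set l : Fin N := ⟨N - 1, by omega⟩ with hl
      have vl : (l:ℕ) = N - 1 := rfl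
      have hsum : ∀ k : Fin N, Φ i k * Psi N k j
          = if k = l then (1 / (N:ℝ)^2) * Psi N l j else 0 := by
        intro k
        rw [hΦ, if_neg hi0, if_pos hiN]
        by_cases hk : (k:ℕ) = N - 1
        · have hkl : k = l := by apply Fin.ext; rw [vl]; exact hk
          rw [if_pos hk, if_pos hkl, hkl]
        · have hkl : k ≠ l := by
            intro h; apply hk; rw [h, vl]
          rw [if_neg hk, if_neg hkl, zero_mul]
      rw [Finset.sum_congr rfl fun k _ => hsum k, Finset.sum_ite_eq' univ l _,
        if_pos (mem_univ l)]
      have hlv : ((l:ℕ):ℝ) = (N:ℝ) - 1 := by rw [vl, hNm1]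
      by_cases hj0 : (j:ℕ) = 0
      · rw [if_neg (by intro h; apply hi0; rw [h]; exact hj0)]
        simp only [Psi, if_pos hj0, hlv]
        ring_nf
      · by_cases hjN : (j:ℕ) = N - 1
        · have hij : i = j := by apply Fin.ext; omega
          rw [if_pos hij]
          simp only [Psi, if_neg hj0, if_pos hjN, hlv]
          field_simp
        · rw [if_neg (by intro h; apply hjN; rw [← h]; exact hiN)]
          simp only [Psi, if_neg hj0, if_neg hjN,
            if_neg (show ¬ (l:ℕ) ≤ (j:ℕ) by rw [vl]; omega), hlv]
          ring_nf
    · -- interior row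
      have ha1 : 1 ≤ (i:ℕ) := by omega
      have ha2 : (i:ℕ) + 1 ≤ N - 1 := by omega
      set im : Fin N := ⟨(i:ℕ) - 1, by omega⟩ with him
      set ip : Fin N := ⟨(i:ℕ) + 1, by omega⟩ with hip
      have vim : (im:ℕ) = (i:ℕ) - 1 := rfl
      have vip : (ip:ℕ) = (i:ℕ) + 1 := rfl
      have hsum : ∀ k : Fin N, Φ i k * Psi N k j
          = (if k = im then Psi N im j else 0)
            + (if k = i then (-2 : ℝ) * Psi N i j else 0)
            + (if k = ip then Psi N ip j else 0) := by
        intro k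
        rw [hΦ, if_neg hi0, if_neg hiN]
        by_cases h1 : k = im
        · rw [if_pos (by rw [h1, vim]; omega), h1,
            if_pos rfl, one_mul,
            if_neg (by simp only [Fin.ext_iff, vim]; omega),
            if_neg (by simp only [Fin.ext_iff, vim, vip]; omega)]
          ring
        · by_cases h2 : k = i
          · rw [if_neg (by rw [h2]; omega), h2,
              if_pos rfl, if_pos rfl,
              if_neg (by simp only [Fin.ext_iff, vim]; omega),
              if_neg (by simp only [Fin.ext_iff, vip]; omega)]
            ring
          · by_cases h3 : k = ip
            · rw [h3, if_neg (by rw [vip]; omega),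
                if_neg (by rw [vip]; omega),
                if_pos vip,
                if_pos rfl, one_mul,
                if_neg (by simp only [Fin.ext_iff, vim, vip]; omega),
                if_neg (by simp only [Fin.ext_iff, vip]; omega)]
              ring
            · have hk1 : ¬ ((k:ℕ) + 1 = (i:ℕ)) := by
                intro h; apply h1; apply Fin.ext; rw [vim]; omega
              have hk2 : ¬ ((k:ℕ) = (i:ℕ)) := by
                intro h; exact h2 (Fin.ext h)
              have hk3 : ¬ ((k:ℕ) = (i:ℕ) + 1) := by
                intro h; apply h3; apply Fin.ext; rw [vip]; omega
              rw [if_neg hk1, if_neg hk2, if_neg hk3, zero_mul,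
                if_neg h1, if_neg h2, if_neg h3]
              ring
      rw [Finset.sum_congr rfl fun k _ => hsum k, Finset.sum_add_distrib,
        Finset.sum_add_distrib, Finset.sum_ite_eq' univ im _,
        Finset.sum_ite_eq' univ i _, Finset.sum_ite_eq' univ ip _,
        if_pos (mem_univ _), if_pos (mem_univ _), if_pos (mem_univ _)]
      have cim : ((im:ℕ):ℝ) = ((i:ℕ):ℝ) - 1 := by
        rw [vim]
        push_cast [ha1]
        ring
      have cip : ((ip:ℕ):ℝ) = ((i:ℕ):ℝ) + 1 := by
        rw [vip]; push_cast; ring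
      by_cases hj0 : (j:ℕ) = 0
      · rw [if_neg (by intro h; apply hi0; rw [h]; exact hj0)]
        simp only [Psi, if_pos hj0, cim, cip]
        field_simp
        ring
      · by_cases hjN : (j:ℕ) = N - 1
        · rw [if_neg (by intro h; apply hiN; rw [h]; exact hjN)]
          simp only [Psi, if_neg hj0, if_pos hjN, cim, cip]
          field_simp
          ring
        · -- interior column
          by_cases hc1 : (i:ℕ) + 1 ≤ (j:ℕ)
          · rw [if_neg (show ¬ i = j from fun h => by rw [h] at hc1; omega)]
            simp only [Psi, if_neg hj0, if_neg hjN]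
            rw [if_pos (show (im:ℕ) ≤ (j:ℕ) by rw [vim]; omega),
              if_pos (show (i:ℕ) ≤ (j:ℕ) by omega),
              if_pos (show (ip:ℕ) ≤ (j:ℕ) by rw [vip]; omega),
              cim, cip]
            field_simp
            ring
          · by_cases hc2 : (i:ℕ) = (j:ℕ)
            · rw [if_pos (Fin.ext hc2)]
              simp only [Psi, if_neg hj0, if_neg hjN]
              rw [if_pos (show (im:ℕ) ≤ (j:ℕ) by rw [vim]; omega),
                if_pos (show (i:ℕ) ≤ (j:ℕ) by omega),
                if_neg (show ¬ (ip:ℕ) ≤ (j:ℕ) by rw [vip]; omega),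
                cim, cip]
              have hcj : ((j:ℕ):ℝ) = ((i:ℕ):ℝ) := by rw [hc2]
              rw [hcj]
              field_simp
              ring
            · rw [if_neg (show ¬ i = j from fun h => hc2 (by rw [h]))]
              simp only [Psi, if_neg hj0, if_neg hjN]
              by_cases hc3 : (i:ℕ) = (j:ℕ) + 1
              · rw [if_pos (show (im:ℕ) ≤ (j:ℕ) by rw [vim]; omega),
                  if_neg (show ¬ (i:ℕ) ≤ (j:ℕ) by omega),
                  if_neg (show ¬ (ip:ℕ) ≤ (j:ℕ) by rw [vip]; omega),
                  cim, cip]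
                have hcj : ((i:ℕ):ℝ) = ((j:ℕ):ℝ) + 1 := by
                  exact_mod_cast congrArg (Nat.cast : ℕ → ℝ) hc3
                rw [hcj]
                field_simp
                ring
              · have hgt : (j:ℕ) + 2 ≤ (i:ℕ) := by omega
                rw [if_neg (show ¬ (im:ℕ) ≤ (j:ℕ) by rw [vim]; omega),
                  if_neg (show ¬ (i:ℕ) ≤ (j:ℕ) by omega),
                  if_neg (show ¬ (ip:ℕ) ≤ (j:ℕ) by rw [vip]; omega),
                  cim, cip]
                field_simp
                ring

theorem psi_row_bound {N : ℕ} (hN : 3 ≤ N) (i : Fin N) :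
    ∑ j : Fin N, |Psi N i j| ≤ 3 * (N : ℝ)^2 := by
  have hn3 : (3:ℝ) ≤ (N:ℝ) := by exact_mod_cast hN
  have hm : (0:ℝ) < (N:ℝ) - 1 := by linarith
  have hNm1 : ((N - 1 : ℕ) : ℝ) = (N:ℝ) - 1 := by
    have : 1 ≤ N := by omega
    push_cast [this]; ring
  have hxle : ∀ k : Fin N, ((k:ℕ):ℝ) ≤ (N:ℝ) - 1 := by
    intro k
    rw [← hNm1]
    have hk := k.isLt
    exact_mod_cast (by omega : (k:ℕ) ≤ N - 1)
  have hxnn : ∀ k : Fin N, (0:ℝ) ≤ ((k:ℕ):ℝ) := fun k => Nat.cast_nonneg _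
  -- pointwise bound
  have hbd : ∀ j : Fin N, |Psi N i j|
      ≤ if (j:ℕ) = 0 ∨ (j:ℕ) = N - 1 then (N:ℝ)^2 else (N:ℝ) - 1 := by
    intro j
    by_cases hj0 : (j:ℕ) = 0
    · rw [if_pos (Or.inl hj0)]
      simp only [Psi, if_pos hj0]
      rw [abs_of_nonneg (by
        apply div_nonneg _ hm.le
        have := hxle i
        nlinarith [sq_nonneg ((N:ℝ))] )]
      rw [div_le_iff₀ hm]
      nlinarith [hxnn i, sq_nonneg ((N:ℝ))]
    · by_cases hjN : (j:ℕ) = N - 1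
      · rw [if_pos (Or.inr hjN)]
        simp only [Psi, if_neg hj0, if_pos hjN]
        rw [abs_of_nonneg (div_nonneg (by nlinarith [hxnn i, sq_nonneg ((N:ℝ))]) hm.le)]
        rw [div_le_iff₀ hm]
        nlinarith [hxle i, sq_nonneg ((N:ℝ))]
      · rw [if_neg (by push_neg; exact ⟨hj0, hjN⟩)]
        simp only [Psi, if_neg hj0, if_neg hjN]
        by_cases hc : (i:ℕ) ≤ (j:ℕ)
        · rw [if_pos hc, abs_div, abs_neg,
            abs_of_nonneg (mul_nonneg (hxnn i) (by have := hxle j; linarith)),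
            abs_of_pos hm, div_le_iff₀ hm]
          nlinarith [hxle i, hxle j, hxnn j]
        · rw [if_neg hc, abs_div, abs_neg,
            abs_of_nonneg (mul_nonneg (hxnn j) (by have := hxle i; linarith)),
            abs_of_pos hm, div_le_iff₀ hm]
          nlinarith [hxle i, hxle j, hxnn i]
  calc ∑ j : Fin N, |Psi N i j|
      ≤ ∑ j : Fin N, (if (j:ℕ) = 0 ∨ (j:ℕ) = N - 1 then (N:ℝ)^2 else (N:ℝ) - 1) :=
        Finset.sum_le_sum fun j _ => hbd j
    _ ≤ 3 * (N:ℝ)^2 := by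
        rw [Finset.sum_ite]
        have h1 : (Finset.univ.filter (fun j : Fin N => (j:ℕ) = 0 ∨ (j:ℕ) = N - 1)).card ≤ 2 := by
          have hsub : (Finset.univ.filter (fun j : Fin N => (j:ℕ) = 0 ∨ (j:ℕ) = N - 1))
              ⊆ {(⟨0, by omega⟩ : Fin N), (⟨N - 1, by omega⟩ : Fin N)} := by
            intro x hx
            simp only [Finset.mem_filter, Finset.mem_univ, true_and] at hx
            simp only [Finset.mem_insert, Finset.mem_singleton]
            rcases hx with h | h
            · exact Or.inl (Fin.ext h)
            · exact Or.inr (Fin.ext h)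
          calc _ ≤ _ := Finset.card_le_card hsub
            _ ≤ 2 := Finset.card_insert_le _ _ |>.trans (by simp)
        have h2 : (Finset.univ.filter (fun j : Fin N => ¬((j:ℕ) = 0 ∨ (j:ℕ) = N - 1))).card ≤ N := by
          calc _ ≤ Finset.univ.card := Finset.card_filter_le _ _
            _ = N := Finset.card_univ.trans (Fintype.card_fin N)
        rw [Finset.sum_const, Finset.sum_const, nsmul_eq_mul, nsmul_eq_mul]
        have c1 : ((Finset.univ.filter (fun j : Fin N => (j:ℕ) = 0 ∨ (j:ℕ) = N - 1)).card : ℝ) ≤ 2 := by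
          exact_mod_cast h1
        have c2 : ((Finset.univ.filter (fun j : Fin N => ¬((j:ℕ) = 0 ∨ (j:ℕ) = N - 1))).card : ℝ) ≤ (N:ℝ) := by
          exact_mod_cast h2
        have hsq : (0:ℝ) ≤ (N:ℝ)^2 := sq_nonneg _
        nlinarith

theorem stmt4 {N : ℕ} (hN : 3 ≤ N)
    (Φ : Matrix (Fin N) (Fin N) ℝ)
    (hΦ : ∀ i j : Fin N,
      Φ i j =
        if (i : ℕ) = 0 then (if (j : ℕ) = 0 then 1 / (N : ℝ)^2 else 0)
        else if (i : ℕ) = N - 1 then (if (j : ℕ) = N - 1 then 1 / (N : ℝ)^2 else 0)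
        else if (j : ℕ) + 1 = (i : ℕ) then 1
        else if (j : ℕ) = (i : ℕ) then -2
        else if (j : ℕ) = (i : ℕ) + 1 then 1
        else 0) :
    IsUnit Φ ∧ ∀ i : Fin N, ∑ j : Fin N, |Φ⁻¹ i j| ≤ 3 * (N : ℝ)^2 := by
  have h := mul_psi hN Φ hΦ
  have h' : Psi N * Φ = 1 := mul_eq_one_comm.mp h
  refine ⟨⟨⟨Φ, Psi N, h, h'⟩, rfl⟩, ?_⟩
  rw [Matrix.inv_eq_right_inv h]
  exact fun i => psi_row_bound hN i
end

section
/- Let F ∈ ℂ^{N×N} be Hermitian positive semidefinite of rank s < N with smallest nonzero eigenvalue λ_s(F), and let F̂ = F + E be Hermitian with 2‖E‖ < λ_s(F). Let V₂ and V̂₂ have orthonormal columns spanning, respectively, the eigenspace of F for eigenvalue 0 and the span of eigenvectors of F̂ corresponding to its N−s smallest eigenvalues. Define R(ω) = ‖V₂*φ(ω)‖/‖φ(ω)‖ and R̂(ω) = ‖V̂₂*φ(ω)‖/‖φ(ω)‖ where φ(ω) = (1, e^{2πiω}, …, e^{2πi(N-1)ω})ᵀ. Then sup_{ω ∈ [0,1)}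 |R̂(ω) − R(ω)| ≤ 2‖E‖ / λ_s(F). -/
open Complex Matrix
open scoped ComplexOrder

/-- Spectral (ℓ²-operator) norm of a square complex matrix. -/
noncomputable def specNorm {N : ℕ} (M : Matrix (Fin N) (Fin N) ℂ) : ℝ :=
  ‖Matrix.toEuclideanCLM (𝕜 := ℂ) M‖

/-- Euclidean norm of a complex vector. -/
noncomputable def evNorm {m : ℕ} (v : Fin m → ℂ) : ℝ :=
  Real.sqrt (∑ i, ‖v i‖^2)

/-!
Let `P` and `P̂` be the orthogonal projections onto `ker F = span V₂` and `U = span V̂₂`, so that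
`R(ω) = ‖P φ‖ / ‖φ‖` and `R̂(ω) = ‖P̂ φ‖ / ‖φ‖`; it suffices to show `‖P̂ - P‖ ≤ 2‖E‖/λ`.
Since `F ≥ 0` and `dim ker F = N - s`, min-max arguments show that the `N - s` smallest
eigenvalues of `F̂` lie in `[-‖E‖, ‖E‖]` and that `F̂ ≥ λ - ‖E‖` on `Uᗮ`.
On `U` we get `‖F u‖ ≤ ‖F̂ u‖ + ‖E u‖ ≤ 2‖E‖ ‖u‖` while `F ≥ λ` on `(ker F)ᗮ`, and on `ker F`
we get `‖F̂ w‖ = ‖E w‖` while `F̂ ≥ λ - ‖E‖ ≥ λ/2` on `Uᗮ`. Both subspaces being invariant, this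
bounds `(1 - P) P̂` (hence its adjoint `P̂ (1 - P)`) and `(1 - P̂) P` by `2‖E‖/λ`, and
`P̂ - P = P̂ (1 - P) - (1 - P̂) P` is a sum of two orthogonal pieces.
-/

open Module Submodule
open scoped InnerProductSpace

section OrthonormalEigenvectors

variable {𝕜 E ι : Type*} [RCLike 𝕜] [NormedAddCommGroup E] [InnerProductSpace 𝕜 E] [Fintype ι]
  {v : ι → E} {A : E →ₗ[𝕜] E} {c : ι → ℝ}

lemma map_sum_smul_of_apply_eq_smul (hA : ∀ i, A (v i) = (c i : 𝕜) • v i) (a : ι → 𝕜) :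
    A (∑ i, a i • v i) = ∑ i, ((c i : 𝕜) * a i) • v i := by
  simp [map_sum, hA, smul_smul, mul_comm]

lemma map_mem_span_range_of_apply_eq_smul (hA : ∀ i, A (v i) = (c i : 𝕜) • v i) {z : E}
    (hz : z ∈ span 𝕜 (Set.range v)) : A z ∈ span 𝕜 (Set.range v) := by
  obtain ⟨a, rfl⟩ := (mem_span_range_iff_exists_fun 𝕜).1 hz
  rw [map_sum_smul_of_apply_eq_smul hA]
  exact (mem_span_range_iff_exists_fun 𝕜).2 ⟨_, rfl⟩

namespace Orthonormal

lemma re_inner_sum_smul_sum_smul (hv : Orthonormal 𝕜 v) (a : ι → 𝕜) (c : ι → ℝ) :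
    RCLike.re ⟪∑ i, a i • v i, ∑ i, ((c i : 𝕜) * a i) • v i⟫_𝕜 = ∑ i, c i * ‖a i‖ ^ 2 := by
  rw [hv.inner_sum, map_sum]
  refine Finset.sum_congr rfl fun i _ => ?_
  rw [mul_left_comm, RCLike.conj_mul, RCLike.re_ofReal_mul]
  norm_cast

lemma norm_sum_smul_sq (hv : Orthonormal 𝕜 v) (a : ι → 𝕜) :
    ‖∑ i, a i • v i‖ ^ 2 = ∑ i, ‖a i‖ ^ 2 := by
  simpa using hv.re_inner_sum_smul_sum_smul a 1

lemma le_re_inner_map_of_mem_span (hv : Orthonormal 𝕜 v) (hA : ∀ i, A (v i) = (c i : 𝕜) • v i)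
    {a : ℝ} (hc : ∀ i, a ≤ c i) {z : E} (hz : z ∈ span 𝕜 (Set.range v)) :
    a * ‖z‖ ^ 2 ≤ RCLike.re ⟪z, A z⟫_𝕜 := by
  obtain ⟨b, rfl⟩ := (mem_span_range_iff_exists_fun 𝕜).1 hz
  rw [map_sum_smul_of_apply_eq_smul hA, hv.re_inner_sum_smul_sum_smul, hv.norm_sum_smul_sq,
    Finset.mul_sum]
  exact Finset.sum_le_sum fun i _ => mul_le_mul_of_nonneg_right (hc i) (by positivity)

lemma norm_map_le_of_mem_span (hv : Orthonormal 𝕜 v) (hA : ∀ i, A (v i) = (c i : 𝕜) • v i)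
    {a : ℝ} (ha : 0 ≤ a) (hc : ∀ i, |c i| ≤ a) {z : E} (hz : z ∈ span 𝕜 (Set.range v)) :
    ‖A z‖ ≤ a * ‖z‖ := by
  obtain ⟨b, rfl⟩ := (mem_span_range_iff_exists_fun 𝕜).1 hz
  refine le_of_sq_le_sq ?_ (by positivity)
  rw [map_sum_smul_of_apply_eq_smul hA, hv.norm_sum_smul_sq, mul_pow, hv.norm_sum_smul_sq,
    Finset.mul_sum]
  refine Finset.sum_le_sum fun i _ => ?_
  rw [norm_mul, mul_pow, RCLike.norm_ofReal, sq_abs]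
  exact mul_le_mul_of_nonneg_right (sq_le_sq' (abs_le.1 (hc i)).1 (abs_le.1 (hc i)).2)
    (by positivity)

lemma starProjection_span_range [(span 𝕜 (Set.range v)).HasOrthogonalProjection]
    (hv : Orthonormal 𝕜 v) (z : E) :
    (span 𝕜 (Set.range v)).starProjection z = ∑ i, ⟪v i, z⟫_𝕜 • v i := by
  refine eq_starProjection_of_mem_of_inner_eq_zero
    ((mem_span_range_iff_exists_fun 𝕜).2 ⟨_, rfl⟩) fun w hw => ?_
  obtain ⟨a, rfl⟩ := (mem_span_range_iff_exists_fun 𝕜).1 hw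
  simp [inner_sum, inner_sub_left, hv.inner_left_fintype, inner_smul_right]

end Orthonormal

end OrthonormalEigenvectors

section QuadraticForm

variable {𝕜 E : Type*} [RCLike 𝕜] [NormedAddCommGroup E] [InnerProductSpace 𝕜 E]
  {A : E →ₗ[𝕜] E}

lemma mul_norm_le_norm_map_of_le_re_inner {δ : ℝ} {x : E}
    (h : δ * ‖x‖ ^ 2 ≤ RCLike.re ⟪x, A x⟫_𝕜) : δ * ‖x‖ ≤ ‖A x‖ := by
  rcases eq_or_ne x 0 with rfl | hx
  · simp
  refine le_of_mul_le_mul_right ?_ (norm_pos_iff.2 hx)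
  calc δ * ‖x‖ * ‖x‖ = δ * ‖x‖ ^ 2 := by ring
    _ ≤ RCLike.re ⟪x, A x⟫_𝕜 := h
    _ ≤ ‖x‖ * ‖A x‖ := re_inner_le_norm _ _
    _ = ‖A x‖ * ‖x‖ := mul_comm _ _

lemma abs_re_inner_map_le {ε : ℝ} (hA : ∀ x, ‖A x‖ ≤ ε * ‖x‖) (x : E) :
    |RCLike.re ⟪x, A x⟫_𝕜| ≤ ε * ‖x‖ ^ 2 :=
  calc |RCLike.re ⟪x, A x⟫_𝕜| ≤ ‖x‖ * ‖A x‖ :=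
        (RCLike.abs_re_le_norm _).trans (norm_inner_le_norm _ _)
    _ ≤ ‖x‖ * (ε * ‖x‖) := mul_le_mul_of_nonneg_left (hA x) (norm_nonneg x)
    _ = ε * ‖x‖ ^ 2 := by ring

lemma finrank_add_finrank_le_of_re_inner_lt [FiniteDimensional 𝕜 E] {X Y : Submodule 𝕜 E}
    {b : ℝ} (hX : ∀ x ∈ X, b * ‖x‖ ^ 2 ≤ RCLike.re ⟪x, A x⟫_𝕜)
    (hY : ∀ y ∈ Y, y ≠ 0 → RCLike.re ⟪y, A y⟫_𝕜 < b * ‖y‖ ^ 2) :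
    finrank 𝕜 X + finrank 𝕜 Y ≤ finrank 𝕜 E := by
  by_contra! hdim
  have hinf : X ⊓ Y ≠ ⊥ := by
    rw [ne_eq, ← finrank_eq_zero]
    have := finrank_sup_add_finrank_inf_eq X Y
    have := (X ⊔ Y).finrank_le
    omega
  obtain ⟨y, ⟨hyX, hyY⟩, hy⟩ := exists_mem_ne_zero_of_ne_bot hinf
  exact (hX y hyX).not_gt (hY y hyY hy)

end QuadraticForm

section InvariantSubspace

variable {𝕜 E : Type*} [RCLike 𝕜] [NormedAddCommGroup E] [InnerProductSpace 𝕜 E]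
  {A : E →ₗ[𝕜] E} {U : Submodule 𝕜 E}

lemma LinearMap.IsSymmetric.map_mem_orthogonal (hA : A.IsSymmetric) (hUA : ∀ u ∈ U, A u ∈ U)
    {x : E} (hx : x ∈ Uᗮ) : A x ∈ Uᗮ :=
  (mem_orthogonal _ _).2 fun u hu => by rw [← hA, inner_right_of_mem_orthogonal (hUA u hu) hx]

lemma re_inner_map_add_of_mem_orthogonal (hA : A.IsSymmetric) (hUA : ∀ u ∈ U, A u ∈ U)
    {u w : E} (hu : u ∈ U) (hw : w ∈ Uᗮ) :
    RCLike.re ⟪u + w, A (u + w)⟫_𝕜 = RCLike.re ⟪u, A u⟫_𝕜 + RCLike.re ⟪w, A w⟫_𝕜 := by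
  rw [map_add, inner_add_left, inner_add_right, inner_add_right,
    inner_right_of_mem_orthogonal hu (hA.map_mem_orthogonal hUA hw),
    inner_left_of_mem_orthogonal (hUA u hu) hw]
  simp

lemma re_inner_map_smul (t : 𝕜) (x : E) :
    RCLike.re ⟪t • x, A (t • x)⟫_𝕜 = ‖t‖ ^ 2 * RCLike.re ⟪x, A x⟫_𝕜 := by
  rw [map_smul, inner_smul_left, inner_smul_right, ← mul_assoc, RCLike.conj_mul]
  norm_cast
  exact RCLike.re_ofReal_mul _ _

/-- A min-max argument: a vector of `Uᗮ` with Rayleigh quotient below `b` would enlarge `U` to a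
subspace of dimension `finrank U + 1` on which the quadratic form stays below `b`, too large to
avoid `X`. -/
lemma le_re_inner_of_mem_orthogonal [FiniteDimensional 𝕜 E] (hA : A.IsSymmetric)
    (hUA : ∀ u ∈ U, A u ∈ U) {X : Submodule 𝕜 E} {a b : ℝ} (hab : a < b)
    (hU : ∀ u ∈ U, RCLike.re ⟪u, A u⟫_𝕜 ≤ a * ‖u‖ ^ 2)
    (hX : ∀ x ∈ X, b * ‖x‖ ^ 2 ≤ RCLike.re ⟪x, A x⟫_𝕜)
    (hdim : finrank 𝕜 E ≤ finrank 𝕜 U + finrank 𝕜 X) {x : E} (hx : x ∈ Uᗮ) :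
    b * ‖x‖ ^ 2 ≤ RCLike.re ⟪x, A x⟫_𝕜 := by
  by_contra! hlt
  have hxU : x ∉ U := fun hxU => by
    obtain rfl : x = 0 := inner_self_eq_zero.1 (inner_right_of_mem_orthogonal hxU hx)
    simp at hlt
  have hY : ∀ y ∈ U ⊔ span 𝕜 {x}, y ≠ 0 → RCLike.re ⟪y, A y⟫_𝕜 < b * ‖y‖ ^ 2 := by
    intro y hy hy0
    obtain ⟨u, hu, w, hw, rfl⟩ := mem_sup.1 hy
    obtain ⟨t, rfl⟩ := mem_span_singleton.1 hw
    have hwU : t • x ∈ Uᗮ := smul_mem _ t hx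
    rw [re_inner_map_add_of_mem_orthogonal hA hUA hu hwU, norm_add_sq (𝕜 := 𝕜),
      inner_right_of_mem_orthogonal hu hwU, map_zero, mul_zero, add_zero, re_inner_map_smul,
      norm_smul, mul_pow]
    rcases eq_or_ne t 0 with rfl | ht
    · have hu0 : 0 < ‖u‖ := norm_pos_iff.2 (by simpa using hy0)
      have : a * ‖u‖ ^ 2 < b * ‖u‖ ^ 2 := by gcongr
      simpa using (hU u hu).trans_lt this
    · have : a * ‖u‖ ^ 2 ≤ b * ‖u‖ ^ 2 := by gcongr
      have : ‖t‖ ^ 2 * RCLike.re ⟪x, A x⟫_𝕜 < b * (‖t‖ ^ 2 * ‖x‖ ^ 2) := by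
        rw [mul_left_comm]; gcongr
      linarith [hU u hu]
  have := finrank_add_finrank_le_of_re_inner_lt hX hY
  rw [finrank_sup_span_singleton hxU] at this
  omega

end InvariantSubspace

section Projections

variable {𝕜 E : Type*} [RCLike 𝕜] [NormedAddCommGroup E] [InnerProductSpace 𝕜 E]

lemma mul_norm_starProjection_orthogonal_le {A : E →ₗ[𝕜] E} (hA : A.IsSymmetric)
    {U : Submodule 𝕜 E} [U.HasOrthogonalProjection] (hUA : ∀ u ∈ U, A u ∈ U) {δ : ℝ}
    (hδ : ∀ x ∈ Uᗮ, δ * ‖x‖ ^ 2 ≤ RCLike.re ⟪x, A x⟫_𝕜) (w : E) :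
    δ * ‖Uᗮ.starProjection w‖ ≤ ‖A w‖ := by
  have hq : Uᗮ.starProjection (A w) = A (Uᗮ.starProjection w) := by
    conv_lhs => rw [← U.starProjection_add_starProjection_orthogonal w, map_add, map_add]
    rw [Uᗮ.starProjection_apply_eq_zero_iff.2
        (U.le_orthogonal_orthogonal (hUA _ (U.starProjection_apply_mem w))),
      starProjection_eq_self_iff.2
        (hA.map_mem_orthogonal hUA (Uᗮ.starProjection_apply_mem w)), zero_add]
  calc δ * ‖Uᗮ.starProjection w‖ ≤ ‖A (Uᗮ.starProjection w)‖ :=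
        mul_norm_le_norm_map_of_le_re_inner (hδ _ (Uᗮ.starProjection_apply_mem w))
    _ = ‖Uᗮ.starProjection (A w)‖ := by rw [hq]
    _ ≤ ‖A w‖ := Uᗮ.norm_starProjection_apply_le _

variable {U W : Submodule 𝕜 E} [U.HasOrthogonalProjection] [W.HasOrthogonalProjection] {c : ℝ}

lemma norm_starProjection_le_of_mem_orthogonal (hc : 0 ≤ c)
    (hU : ∀ u ∈ U, ‖Wᗮ.starProjection u‖ ≤ c * ‖u‖) {x : E} (hx : x ∈ Wᗮ) :
    ‖U.starProjection x‖ ≤ c * ‖x‖ := by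
  set p := U.starProjection x
  rcases eq_or_ne p 0 with hp | hp
  · rw [hp, norm_zero]; positivity
  refine le_of_mul_le_mul_right ?_ (norm_pos_iff.2 hp)
  calc ‖p‖ * ‖p‖ = RCLike.re ⟪p, x⟫_𝕜 := by
        rw [← sq, re_inner_starProjection_eq_normSq]; rfl
    _ = RCLike.re ⟪Wᗮ.starProjection p, x⟫_𝕜 := by
        rw [Wᗮ.inner_starProjection_left_eq_right p x, starProjection_eq_self_iff.2 hx]
    _ ≤ ‖Wᗮ.starProjection p‖ * ‖x‖ := re_inner_le_norm _ _
    _ ≤ c * ‖p‖ * ‖x‖ := by gcongr; exact hU p (U.starProjection_apply_mem x)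
    _ = c * ‖x‖ * ‖p‖ := by ring

lemma norm_starProjection_sub_starProjection_le (hc : 0 ≤ c)
    (hU : ∀ u ∈ U, ‖Wᗮ.starProjection u‖ ≤ c * ‖u‖)
    (hW : ∀ w ∈ W, ‖Uᗮ.starProjection w‖ ≤ c * ‖w‖) (z : E) :
    ‖U.starProjection z - W.starProjection z‖ ≤ c * ‖z‖ := by
  set a := U.starProjection (Wᗮ.starProjection z)
  set b := Uᗮ.starProjection (W.starProjection z)
  have hab : U.starProjection z - W.starProjection z = a - b := by
    simp only [a, b, starProjection_orthogonal_val, map_sub]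
    abel
  have ha : ‖a‖ ≤ c * ‖Wᗮ.starProjection z‖ :=
    norm_starProjection_le_of_mem_orthogonal hc hU (Wᗮ.starProjection_apply_mem z)
  have hb : ‖b‖ ≤ c * ‖W.starProjection z‖ := hW _ (W.starProjection_apply_mem z)
  have hpyth : ‖a - b‖ ^ 2 = ‖a‖ ^ 2 + ‖b‖ ^ 2 := by
    rw [norm_sub_sq (𝕜 := 𝕜), inner_right_of_mem_orthogonal (U.starProjection_apply_mem _)
      (Uᗮ.starProjection_apply_mem _)]
    simp
  rw [hab]
  refine le_of_sq_le_sq ?_ (by positivity)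
  rw [hpyth, mul_pow, norm_sq_eq_add_norm_sq_starProjection z W]
  nlinarith [norm_nonneg a, norm_nonneg b]

end Projections

section Perturbation

variable {𝕜 E : Type*} [RCLike 𝕜] [NormedAddCommGroup E] [InnerProductSpace 𝕜 E]
  [FiniteDimensional 𝕜 E] {T P : E →ₗ[𝕜] E} {ε lam : ℝ} {U : Submodule 𝕜 E}

lemma sub_mul_norm_sq_le_re_inner_of_mem_orthogonal (hTP : (T + P).IsSymmetric)
    (hP : ∀ x, ‖P x‖ ≤ ε * ‖x‖) (hgap : 2 * ε < lam)
    (hlam : ∀ x ∈ (LinearMap.ker T)ᗮ, lam * ‖x‖ ^ 2 ≤ RCLike.re ⟪x, T x⟫_𝕜)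
    (hUinv : ∀ u ∈ U, (T + P) u ∈ U) (hU : ∀ u ∈ U, ‖(T + P) u‖ ≤ ε * ‖u‖)
    (hdim : finrank 𝕜 (LinearMap.ker T) ≤ finrank 𝕜 U) {x : E} (hx : x ∈ Uᗮ) :
    (lam - ε) * ‖x‖ ^ 2 ≤ RCLike.re ⟪x, (T + P) x⟫_𝕜 := by
  have := (LinearMap.ker T).finrank_add_finrank_orthogonal
  refine le_re_inner_of_mem_orthogonal hTP hUinv (X := (LinearMap.ker T)ᗮ) (a := ε)
    (by linarith) (fun u hu => ?_) (fun y hy => ?_) (by omega) hx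
  · calc RCLike.re ⟪u, (T + P) u⟫_𝕜 ≤ ‖u‖ * ‖(T + P) u‖ := re_inner_le_norm _ _
      _ ≤ ‖u‖ * (ε * ‖u‖) := by gcongr; exact hU u hu
      _ = ε * ‖u‖ ^ 2 := by ring
  · rw [LinearMap.add_apply, inner_add_right, map_add]
    linarith [hlam y hy, (abs_le.1 (abs_re_inner_map_le hP y)).1]

theorem norm_starProjection_sub_starProjection_ker_le (hT : T.IsSymmetric)
    (hTP : (T + P).IsSymmetric) (hε : 0 ≤ ε) (hP : ∀ x, ‖P x‖ ≤ ε * ‖x‖) (hgap : 2 * ε < lam)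
    (hlam : ∀ x ∈ (LinearMap.ker T)ᗮ, lam * ‖x‖ ^ 2 ≤ RCLike.re ⟪x, T x⟫_𝕜)
    (hUinv : ∀ u ∈ U, (T + P) u ∈ U) (hU : ∀ u ∈ U, ‖(T + P) u‖ ≤ ε * ‖u‖)
    (hdim : finrank 𝕜 (LinearMap.ker T) ≤ finrank 𝕜 U) (z : E) :
    ‖U.starProjection z - (LinearMap.ker T).starProjection z‖ ≤ 2 * ε / lam * ‖z‖ := by
  have hlam0 : 0 < lam := by linarith
  refine norm_starProjection_sub_starProjection_le (by positivity) (fun u hu => ?_)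
    (fun w hw => ?_) z
  · have hker : ∀ x ∈ LinearMap.ker T, T x ∈ LinearMap.ker T := fun x hx => by
      rw [LinearMap.mem_ker.1 hx]; exact zero_mem _
    have h := mul_norm_starProjection_orthogonal_le hT hker hlam u
    have hTu : ‖T u‖ ≤ ‖(T + P) u‖ + ‖P u‖ := by
      simpa using norm_sub_le ((T + P) u) (P u)
    rw [div_mul_eq_mul_div, le_div_iff₀ hlam0]
    linarith [hU u hu, hP u]
  · have h := mul_norm_starProjection_orthogonal_le hTP hUinv
      (fun _ => sub_mul_norm_sq_le_re_inner_of_mem_orthogonal hTP hP hgap hlam hUinv hU hdim) w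
    have hPw : (T + P) w = P w := by simp [LinearMap.mem_ker.1 hw]
    rw [hPw] at h
    have hq := norm_nonneg (Uᗮ.starProjection w)
    rw [div_mul_eq_mul_div, le_div_iff₀ hlam0]
    nlinarith [hP w]

end Perturbation

namespace OrthonormalBasis

variable {𝕜 E ι : Type*} [RCLike 𝕜] [NormedAddCommGroup E] [InnerProductSpace 𝕜 E] [Fintype ι]
  (b : OrthonormalBasis ι 𝕜 E) {A : E →ₗ[𝕜] E} {μ : ι → ℝ}

lemma mul_norm_sq_le_re_inner_of_mem_orthogonal_ker (hA : ∀ i, A (b i) = (μ i : 𝕜) • b i)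
    {lam : ℝ} (hlam : ∀ i, μ i ≠ 0 → lam ≤ μ i) {x : E} (hx : x ∈ (LinearMap.ker A)ᗮ) :
    lam * ‖x‖ ^ 2 ≤ RCLike.re ⟪x, A x⟫_𝕜 := by
  rw [← b.sum_repr' x, map_sum_smul_of_apply_eq_smul hA, b.orthonormal.re_inner_sum_smul_sum_smul,
    b.orthonormal.norm_sum_smul_sq, Finset.mul_sum]
  refine Finset.sum_le_sum fun i _ => ?_
  rcases eq_or_ne (μ i) 0 with h | h
  · have hbi : b i ∈ LinearMap.ker A := by simp [hA i, h]
    simp [inner_right_of_mem_orthogonal hbi hx]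
  · exact mul_le_mul_of_nonneg_right (hlam i h) (by positivity)

/-- Weyl-type bound: the eigenvectors `b j` for `j` outside the range of `κ`, together with
`b (κ k)`, span a subspace on which the quadratic form is at least `μ (κ k)`; it is too large
to avoid `W`. -/
lemma eigenvalue_le_of_re_inner_le (hA : ∀ i, A (b i) = (μ i : 𝕜) • b i) {m : Type*} [Fintype m]
    {κ : m → ι} (hκ : Function.Injective κ) (hsmall : ∀ k, ∀ j ∉ Set.range κ, μ (κ k) ≤ μ j)
    {W : Submodule 𝕜 E} {a : ℝ} (hW : ∀ w ∈ W, RCLike.re ⟪w, A w⟫_𝕜 ≤ a * ‖w‖ ^ 2)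
    (hdim : Fintype.card m ≤ finrank 𝕜 W) (k : m) : μ (κ k) ≤ a := by
  classical
  have := b.toBasis.finiteDimensional_of_finite
  by_contra! ha
  set J : Finset ι := insert (κ k) (Finset.univ.image κ)ᶜ
  have hv : Orthonormal 𝕜 fun j : J => b j := b.orthonormal.comp _ Subtype.val_injective
  have hJ : ∀ j : J, μ (κ k) ≤ μ j := fun ⟨j, hj⟩ => by
    rcases Finset.mem_insert.1 hj with rfl | hj
    · exact le_rfl
    · exact hsmall k j (by simpa using hj)
  have hX : ∀ x ∈ span 𝕜 (Set.range fun j : J => b j), μ (κ k) * ‖x‖ ^ 2 ≤ RCLike.re ⟪x, A x⟫_𝕜 :=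
    fun x hx => hv.le_re_inner_map_of_mem_span (c := fun j : J => μ j) (fun j => hA j) hJ hx
  have hY : ∀ y ∈ W, y ≠ 0 → RCLike.re ⟪y, A y⟫_𝕜 < μ (κ k) * ‖y‖ ^ 2 := fun y hy hy0 => by
    have : 0 < ‖y‖ := norm_pos_iff.2 hy0
    exact (hW y hy).trans_lt (by gcongr)
  have hcard : J.card = Fintype.card ι - Fintype.card m + 1 := by
    rw [Finset.card_insert_of_notMem (by simp), Finset.card_compl,
      Finset.card_image_of_injective _ hκ, Finset.card_univ]
  have := finrank_add_finrank_le_of_re_inner_lt hX hY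
  rw [finrank_span_eq_card hv.linearIndependent, Fintype.card_coe, hcard,
    finrank_eq_card_basis b.toBasis] at this
  have := Fintype.card_le_of_injective κ hκ
  omega

end OrthonormalBasis

lemma abs_eigenvalue_le_of_isPositive {𝕜 E ι m : Type*} [RCLike 𝕜] [NormedAddCommGroup E]
    [InnerProductSpace 𝕜 E] [Fintype ι] [Fintype m] {T P : E →ₗ[𝕜] E} (hT : T.IsPositive)
    {ε : ℝ} (hP : ∀ x, ‖P x‖ ≤ ε * ‖x‖) (b : OrthonormalBasis ι 𝕜 E) {μ : ι → ℝ}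
    (hb : ∀ i, (T + P) (b i) = (μ i : 𝕜) • b i) {κ : m → ι} (hκ : Function.Injective κ)
    (hsmall : ∀ k, ∀ j ∉ Set.range κ, μ (κ k) ≤ μ j)
    (hdim : Fintype.card m ≤ finrank 𝕜 (LinearMap.ker T)) (k : m) : |μ (κ k)| ≤ ε := by
  refine abs_le.2 ⟨?_, b.eigenvalue_le_of_re_inner_le hb hκ hsmall (fun w hw => ?_) hdim k⟩
  · have h : RCLike.re ⟪b (κ k), (T + P) (b (κ k))⟫_𝕜 = μ (κ k) := by
      rw [hb, inner_smul_right, inner_self_eq_norm_sq_to_K, b.norm_eq_one]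
      simp
    have hP' := (abs_le.1 (abs_re_inner_map_le hP (b (κ k)))).1
    rw [LinearMap.add_apply, inner_add_right, map_add] at h
    rw [b.norm_eq_one] at hP'
    linarith [hT.re_inner_nonneg_right (b (κ k))]
  · rw [LinearMap.add_apply, LinearMap.mem_ker.1 hw, zero_add]
    exact (le_abs_self _).trans (abs_re_inner_map_le hP w)

namespace Matrix

variable {𝕜 m n : Type*} [RCLike 𝕜]

def euclideanCol (V : Matrix m n 𝕜) (k : n) : EuclideanSpace 𝕜 m := WithLp.toLp 2 (Vᵀ k)

lemma conjTranspose_mulVec_apply_eq_inner [Fintype m] (V : Matrix m n 𝕜) (z : m → 𝕜) (k : n) :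
    (Vᴴ *ᵥ z) k = ⟪V.euclideanCol k, WithLp.toLp 2 z⟫_𝕜 := by
  simp [euclideanCol, mulVec, dotProduct, EuclideanSpace.inner_toLp_toLp, mul_comm]

lemma orthonormal_euclideanCol [Fintype m] [DecidableEq n] {V : Matrix m n 𝕜}
    (hV : Vᴴ * V = 1) : Orthonormal 𝕜 V.euclideanCol := by
  refine orthonormal_iff_ite.2 fun k l => ?_
  rw [← one_apply, ← hV, ← conjTranspose_mulVec_apply_eq_inner]
  simp [euclideanCol, mulVec, dotProduct, mul_apply]

lemma finrank_span_euclideanCol [Fintype m] [Fintype n] [DecidableEq n] {V : Matrix m n 𝕜}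
    (hV : Vᴴ * V = 1) : finrank 𝕜 (span 𝕜 (Set.range V.euclideanCol)) = Fintype.card n :=
  finrank_span_eq_card (orthonormal_euclideanCol hV).linearIndependent

lemma sum_smul_euclideanCol [Fintype n] (V : Matrix m n 𝕜) (c : n → 𝕜) :
    ∑ k, c k • V.euclideanCol k = WithLp.toLp 2 (V *ᵥ c) := by
  ext i
  simp [euclideanCol, mulVec, dotProduct, mul_comm]

lemma ker_toEuclideanLin_eq_span_euclideanCol [Fintype m] [Fintype n] [DecidableEq m]
    {A : Matrix m m 𝕜} {V : Matrix m n 𝕜} (h : ∀ v, A *ᵥ v = 0 ↔ ∃ c, v = V *ᵥ c) :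
    LinearMap.ker (toEuclideanLin A) = span 𝕜 (Set.range V.euclideanCol) := by
  ext x
  simp only [LinearMap.mem_ker, mem_span_range_iff_exists_fun, sum_smul_euclideanCol]
  rw [toLpLin_apply, ← WithLp.toLp_zero 2, (WithLp.toLp_injective 2).eq_iff, h]
  exact exists_congr fun c => by rw [eq_comm, ← (WithLp.ofLp_injective 2).eq_iff, WithLp.ofLp_toLp]

lemma norm_conjTranspose_mulVec [Fintype m] [Fintype n] [DecidableEq n] {V : Matrix m n 𝕜}
    (hV : Vᴴ * V = 1) (z : m → 𝕜) :
    ‖WithLp.toLp 2 (Vᴴ *ᵥ z)‖ =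
      ‖(span 𝕜 (Set.range V.euclideanCol)).starProjection (WithLp.toLp 2 z)‖ := by
  rw [(orthonormal_euclideanCol hV).starProjection_span_range, EuclideanSpace.norm_eq,
    ← Real.sqrt_sq (norm_nonneg _), (orthonormal_euclideanCol hV).norm_sum_smul_sq]
  simp [conjTranspose_mulVec_apply_eq_inner]

lemma IsHermitian.toEuclideanLin_eigenvectorBasis [Fintype n] [DecidableEq n] {A : Matrix n n 𝕜}
    (hA : A.IsHermitian) (j : n) :
    toEuclideanLin A (hA.eigenvectorBasis j) = (hA.eigenvalues j : 𝕜) • hA.eigenvectorBasis j := by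
  rw [toLpLin_apply, hA.mulVec_eigenvectorBasis, RCLike.real_smul_eq_coe_smul (K := 𝕜),
    WithLp.toLp_smul, WithLp.toLp_ofLp]

end Matrix

lemma evNorm_eq_norm {m : ℕ} (v : Fin m → ℂ) : evNorm v = ‖WithLp.toLp 2 v‖ := by
  rw [EuclideanSpace.norm_eq]; rfl

lemma abs_evNorm_div_sub_evNorm_div_le {N m : ℕ} {V W : Matrix (Fin N) (Fin m) ℂ}
    (hV : Vᴴ * V = 1) (hW : Wᴴ * W = 1) {c : ℝ} (hc : 0 ≤ c)
    (h : ∀ z, ‖(span ℂ (Set.range V.euclideanCol)).starProjection z -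
      (span ℂ (Set.range W.euclideanCol)).starProjection z‖ ≤ c * ‖z‖) (z : Fin N → ℂ) :
    |evNorm (Vᴴ *ᵥ z) / evNorm z - evNorm (Wᴴ *ᵥ z) / evNorm z| ≤ c := by
  rw [evNorm_eq_norm, evNorm_eq_norm, evNorm_eq_norm, norm_conjTranspose_mulVec hV,
    norm_conjTranspose_mulVec hW, ← sub_div, abs_div, abs_norm]
  exact div_le_of_le_mul₀ (norm_nonneg _) hc ((abs_norm_sub_norm_le _ _).trans (h _))

lemma norm_toEuclideanLin_le_specNorm {N : ℕ} (M : Matrix (Fin N) (Fin N) ℂ)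
    (x : EuclideanSpace ℂ (Fin N)) : ‖toEuclideanLin M x‖ ≤ specNorm M * ‖x‖ :=
  (toEuclideanCLM (𝕜 := ℂ) M).le_opNorm x

theorem stmt7_general {N s : ℕ}
    (F E Fh : Matrix (Fin N) (Fin N) ℂ)
    (hF : F.IsHermitian) (hPSD : F.PosSemidef)
    (hFh : Fh = F + E) (hFhHerm : Fh.IsHermitian)
    (lam : ℝ)
    (hlam_min : ∀ i, hF.eigenvalues i ≠ 0 → lam ≤ hF.eigenvalues i)
    (hE : 2 * specNorm E < lam)
    (V₂ : Matrix (Fin N) (Fin (N - s)) ℂ) (hV₂orth : V₂ᴴ * V₂ = 1)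
    (hV₂ker : ∀ v : Fin N → ℂ, F.mulVec v = 0 ↔ ∃ c, v = V₂.mulVec c)
    (Vh₂ : Matrix (Fin N) (Fin (N - s)) ℂ) (hVh₂orth : Vh₂ᴴ * Vh₂ = 1)
    (ι : Fin (N - s) → Fin N) (hι : Function.Injective ι)
    (hVh₂eig : ∀ k, Fh.mulVec (fun i => Vh₂ i k) =
      (hFhHerm.eigenvalues (ι k) : ℂ) • (fun i => Vh₂ i k))
    (hsmall : ∀ k, ∀ j, j ∉ Set.range ι →
      hFhHerm.eigenvalues (ι k) ≤ hFhHerm.eigenvalues j)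
    (φ : ℝ → (Fin N → ℂ)) :
    ∀ x ∈ Set.Ico (0 : ℝ) 1,
      |evNorm (Vh₂ᴴ.mulVec (φ x)) / evNorm (φ x) -
        evNorm (V₂ᴴ.mulVec (φ x)) / evNorm (φ x)| ≤ 2 * specNorm E / lam := by
  intro x _
  set T := toEuclideanLin F
  set P := toEuclideanLin E
  have hTP : toEuclideanLin Fh = T + P := by rw [hFh, map_add]
  have hε : 0 ≤ specNorm E := norm_nonneg _
  have hP : ∀ y, ‖P y‖ ≤ specNorm E * ‖y‖ := norm_toEuclideanLin_le_specNorm E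
  have hker := ker_toEuclideanLin_eq_span_euclideanCol hV₂ker
  have hkerdim : finrank ℂ (LinearMap.ker T) = N - s := by
    rw [hker, finrank_span_euclideanCol hV₂orth, Fintype.card_fin]
  have hcol : ∀ k, (T + P) (Vh₂.euclideanCol k) =
      (hFhHerm.eigenvalues (ι k) : ℂ) • Vh₂.euclideanCol k :=
    fun k => hTP ▸ congrArg (WithLp.toLp 2) (hVh₂eig k)
  have hμ := abs_eigenvalue_le_of_isPositive (isPositive_toEuclideanLin_iff.2 hPSD) hP
    hFhHerm.eigenvectorBasis (fun i => hTP ▸ hFhHerm.toEuclideanLin_eigenvectorBasis i) hι hsmall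
    (by rw [hkerdim, Fintype.card_fin])
  have key := norm_starProjection_sub_starProjection_ker_le
    (isSymmetric_toEuclideanLin_iff.2 hF) (hTP ▸ isSymmetric_toEuclideanLin_iff.2 hFhHerm)
    hε hP hE
    (fun _ => hF.eigenvectorBasis.mul_norm_sq_le_re_inner_of_mem_orthogonal_ker
      hF.toEuclideanLin_eigenvectorBasis hlam_min)
    (fun _ => map_mem_span_range_of_apply_eq_smul hcol)
    (fun _ => (orthonormal_euclideanCol hVh₂orth).norm_map_le_of_mem_span hcol hε hμ)
    (by rw [hkerdim, finrank_span_euclideanCol hVh₂orth, Fintype.card_fin])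
  rw [hker] at key
  exact abs_evNorm_div_sub_evNorm_div_le hVh₂orth hV₂orth (div_nonneg (by linarith) (by linarith))
    key (φ x)

theorem stmt7 {N s : ℕ} (hs : s < N)
    (F E Fh : Matrix (Fin N) (Fin N) ℂ)
    (hF : F.IsHermitian) (hPSD : F.PosSemidef) (hrank : F.rank = s)
    (hFh : Fh = F + E) (hFhHerm : Fh.IsHermitian)
    (lam : ℝ) (hlam_mem : lam ∈ Set.range hF.eigenvalues) (hlam_pos : 0 < lam)
    (hlam_min : ∀ i, hF.eigenvalues i ≠ 0 → lam ≤ hF.eigenvalues i)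
    (hE : 2 * specNorm E < lam)
    (V₂ : Matrix (Fin N) (Fin (N - s)) ℂ) (hV₂orth : V₂ᴴ * V₂ = 1)
    (hV₂ker : ∀ v : Fin N → ℂ, F.mulVec v = 0 ↔ ∃ c, v = V₂.mulVec c)
    (Vh₂ : Matrix (Fin N) (Fin (N - s)) ℂ) (hVh₂orth : Vh₂ᴴ * Vh₂ = 1)
    (ι : Fin (N - s) → Fin N) (hι : Function.Injective ι)
    (hVh₂eig : ∀ k, Fh.mulVec (fun i => Vh₂ i k) =
      (hFhHerm.eigenvalues (ι k) : ℂ) • (fun i => Vh₂ i k))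
    (hsmall : ∀ k, ∀ j, j ∉ Set.range ι →
      hFhHerm.eigenvalues (ι k) ≤ hFhHerm.eigenvalues j)
    (φ : ℝ → (Fin N → ℂ))
    (hφ : ∀ (x : ℝ) (n : Fin N), φ x n = Complex.exp (2 * Real.pi * Complex.I * (n : ℕ) * x)) :
    ∀ x ∈ Set.Ico (0 : ℝ) 1,
      |evNorm (Vh₂ᴴ.mulVec (φ x)) / evNorm (φ x) -
        evNorm (V₂ᴴ.mulVec (φ x)) / evNorm (φ x)| ≤ 2 * specNorm E / lam :=
  stmt7_general F E Fh hF hPSD hFh hFhHerm lam hlam_min hE V₂ hV₂orth hV₂ker Vh₂ hVh₂orth ι hι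
    hVh₂eig hsmall φ
end

section
/- Let n₀ > 0, ρ > 0 and define for f ∈ ℂ^N the map ∇_f G(f) = (ρ/(2n₀)) G₀′(‖f‖²/(2n₀)) f, where G₀′(z) = 2 max(z−1, 0). Then for any f, f̃ ∈ ℂ^N with ‖f‖ ≤ 2√n₀ and ‖f̃‖ ≤ 2√n₀, we have ‖∇_f G(f̃) − ∇_f G(f)‖ ≤ (6ρ/n₀) ‖f̃ − f‖. -/
/-!
`∇G(f) = w(‖f‖²) • f` for a weight `w` that is bounded by `ρ / n₀` and `ρ / 2n₀²`-Lipschitz on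
`[0, 4n₀]`. Writing `w(‖f̃‖²) f̃ - w(‖f‖²) f = w(‖f̃‖²) (f̃ - f) + (w(‖f̃‖²) - w(‖f‖²)) f` and using
`|‖f̃‖² - ‖f‖²| ≤ (‖f̃‖ + ‖f‖) ‖f̃ - f‖ ≤ 4√n₀ ‖f̃ - f‖` gives the constant `ρ/n₀ + 4ρ/n₀ ≤ 6ρ/n₀`.
-/

open scoped NNReal

theorem abs_norm_sq_sub_norm_sq_le {E : Type*} [SeminormedAddCommGroup E] (x y : E) :
    |‖x‖ ^ 2 - ‖y‖ ^ 2| ≤ (‖x‖ + ‖y‖) * ‖x - y‖ := by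
  rw [sq_sub_sq, abs_mul, abs_of_nonneg (by positivity)]
  gcongr
  exact abs_norm_sub_norm_le x y

section RadialRescaling

variable {E : Type*} [SeminormedAddCommGroup E] [NormedSpace ℝ E]

theorem norm_smul_sub_smul_le (a b : ℝ) (x y : E) :
    ‖a • x - b • y‖ ≤ |a| * ‖x - y‖ + |a - b| * ‖y‖ := by
  calc ‖a • x - b • y‖ = ‖a • (x - y) + (a - b) • y‖ := by
        rw [smul_sub, sub_smul]; abel_nf
    _ ≤ |a| * ‖x - y‖ + |a - b| * ‖y‖ := by
        simpa only [norm_smul, Real.norm_eq_abs] using norm_add_le (a • (x - y)) ((a - b) • y)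

theorem norm_smul_normSq_sub_smul_normSq_le {φ : ℝ → ℝ} {K : ℝ≥0} {M R : ℝ}
    (hφ : LipschitzOnWith K φ (Set.Icc 0 (R ^ 2))) (hM : ∀ t ∈ Set.Icc 0 (R ^ 2), |φ t| ≤ M)
    {x y : E} (hx : ‖x‖ ≤ R) (hy : ‖y‖ ≤ R) :
    ‖φ (‖x‖ ^ 2) • x - φ (‖y‖ ^ 2) • y‖ ≤ (M + 2 * K * R ^ 2) * ‖x - y‖ := by
  have hR : 0 ≤ R := (norm_nonneg x).trans hx
  have hmem : ∀ z : E, ‖z‖ ≤ R → ‖z‖ ^ 2 ∈ Set.Icc 0 (R ^ 2) := fun z hz =>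
    ⟨by positivity, pow_le_pow_left₀ (norm_nonneg z) hz 2⟩
  have hdiff : |φ (‖x‖ ^ 2) - φ (‖y‖ ^ 2)| ≤ K * (2 * R * ‖x - y‖) := by
    calc |φ (‖x‖ ^ 2) - φ (‖y‖ ^ 2)| ≤ K * |‖x‖ ^ 2 - ‖y‖ ^ 2| := by
          simpa only [Real.dist_eq] using hφ.dist_le_mul _ (hmem x hx) _ (hmem y hy)
      _ ≤ K * (2 * R * ‖x - y‖) := by
          gcongr
          exact (abs_norm_sq_sub_norm_sq_le x y).trans (by gcongr; linarith)
  calc ‖φ (‖x‖ ^ 2) • x - φ (‖y‖ ^ 2) • y‖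
      ≤ |φ (‖x‖ ^ 2)| * ‖x - y‖ + |φ (‖x‖ ^ 2) - φ (‖y‖ ^ 2)| * ‖y‖ :=
        norm_smul_sub_smul_le _ _ x y
    _ ≤ M * ‖x - y‖ + K * (2 * R * ‖x - y‖) * R := by
        gcongr
        exact hM _ (hmem x hx)
    _ = (M + 2 * K * R ^ 2) * ‖x - y‖ := by ring

end RadialRescaling

section PenaltyWeight

/-- The weight `(ρ / 2n₀) G₀'(t / 2n₀)` with `G₀'(z) = 2 max (z - 1) 0`, so that
`∇_f G(f) = penaltyWeight n₀ ρ ‖f‖² • f`. -/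
noncomputable def penaltyWeight (n₀ ρ t : ℝ) : ℝ := ρ / (2 * n₀) * (2 * max (t / (2 * n₀) - 1) 0)

variable {n₀ ρ : ℝ}

theorem penaltyWeight_nonneg (hn₀ : 0 ≤ n₀) (hρ : 0 ≤ ρ) (t : ℝ) : 0 ≤ penaltyWeight n₀ ρ t := by
  unfold penaltyWeight
  have := le_max_right (t / (2 * n₀) - 1) 0
  positivity

theorem penaltyWeight_le (hn₀ : 0 < n₀) (hρ : 0 ≤ ρ) {t : ℝ} (ht : t ≤ 4 * n₀) :
    penaltyWeight n₀ ρ t ≤ ρ / n₀ := by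
  have hmax : max (t / (2 * n₀) - 1) 0 ≤ 1 := by
    refine max_le ?_ zero_le_one
    rw [sub_le_iff_le_add, div_le_iff₀ (by positivity)]
    linarith
  calc penaltyWeight n₀ ρ t ≤ ρ / (2 * n₀) * (2 * 1) := by unfold penaltyWeight; gcongr
    _ = ρ / n₀ := by field_simp

theorem lipschitzWith_penaltyWeight (hρ : 0 ≤ ρ) :
    LipschitzWith (ρ / (2 * n₀ ^ 2)).toNNReal (penaltyWeight n₀ ρ) := by
  refine LipschitzWith.of_dist_le_mul fun s t => ?_
  have hsplit : penaltyWeight n₀ ρ s - penaltyWeight n₀ ρ t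
      = ρ / n₀ * (max (s / (2 * n₀) - 1) 0 - max (t / (2 * n₀) - 1) 0) := by
    unfold penaltyWeight; ring
  rw [Real.coe_toNNReal _ (by positivity), Real.dist_eq, Real.dist_eq, hsplit, abs_mul]
  calc |ρ / n₀| * |max (s / (2 * n₀) - 1) 0 - max (t / (2 * n₀) - 1) 0|
      ≤ |ρ / n₀| * |(s / (2 * n₀) - 1) - (t / (2 * n₀) - 1)| :=
        mul_le_mul_of_nonneg_left (abs_max_sub_max_le_abs _ _ _) (abs_nonneg _)
    _ = ρ / (2 * n₀ ^ 2) * |s - t| := by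
        rw [show (s / (2 * n₀) - 1) - (t / (2 * n₀) - 1) = (s - t) / (2 * n₀) by ring, abs_div,
          abs_div, abs_of_nonneg hρ, abs_mul, abs_two, ← sq_abs n₀]
        ring

end PenaltyWeight

theorem stmt10 {N : ℕ} (n₀ ρ : ℝ) (hn₀ : 0 < n₀) (hρ : 0 < ρ)
    (gradG : EuclideanSpace ℂ (Fin N) → EuclideanSpace ℂ (Fin N))
    (hgradG : ∀ f, gradG f = ((ρ / (2 * n₀)) * (2 * max (‖f‖^2 / (2 * n₀) - 1) 0) : ℝ) • f)
    (f ft : EuclideanSpace ℂ (Fin N))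
    (hf : ‖f‖ ≤ 2 * Real.sqrt n₀) (hft : ‖ft‖ ≤ 2 * Real.sqrt n₀) :
    ‖gradG ft - gradG f‖ ≤ (6 * ρ / n₀) * ‖ft - f‖ := by
  have hgradG' : ∀ f, gradG f = penaltyWeight n₀ ρ (‖f‖ ^ 2) • f := hgradG
  have hR : (2 * Real.sqrt n₀) ^ 2 = 4 * n₀ := by
    rw [mul_pow, Real.sq_sqrt hn₀.le]; norm_num
  have hbound : ∀ t ∈ Set.Icc 0 ((2 * Real.sqrt n₀) ^ 2), |penaltyWeight n₀ ρ t| ≤ ρ / n₀ :=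
    fun t ht => by
      rw [abs_of_nonneg (penaltyWeight_nonneg hn₀.le hρ.le t)]
      exact penaltyWeight_le hn₀ hρ.le (hR ▸ ht.2)
  calc ‖gradG ft - gradG f‖
      ≤ (ρ / n₀ + 2 * (ρ / (2 * n₀ ^ 2)).toNNReal * (2 * Real.sqrt n₀) ^ 2) * ‖ft - f‖ := by
        rw [hgradG', hgradG']
        exact norm_smul_normSq_sub_smul_normSq_le
          (lipschitzWith_penaltyWeight hρ.le).lipschitzOnWith hbound hft hf
    _ = 5 * ρ / n₀ * ‖ft - f‖ := by
        rw [hR, Real.coe_toNNReal _ (by positivity)]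
        field_simp
        ring
    _ ≤ 6 * ρ / n₀ * ‖ft - f‖ := by gcongr; norm_num
end

section
/- Let R^y_e and R̃^y_e be Hermitian N×N matrices and σ² > 0. Define σ̂² = (1/(N−s)) ∑_{l=s}^{N-1} λ_l(R̃^y_e) where λ_0 ≥ … ≥ λ_{N-1} are the eigenvalues of R̃^y_e in decreasing order, and suppose R^y_e = R^y + σ² I_N where R^y is Hermitian PSD of rank at most s. With R̂^y = R̃^y_e − σ̂² I_N, we have ‖R^y − R̂^y‖ ≤ ‖R^y_e − R̃^y_e‖ + |σ² − σ̂²| ≤ 2 ‖R^y_e − R̃^y_e‖. -/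
open Complex Matrix
open scoped ComplexOrder

/-!
Write `D = ‖R^y_e - R̃^y_e‖`. Since `R^y_e = R^y + σ² I` with `R^y ⪰ 0`, every Rayleigh quotient of
`R^y_e` is at least `σ²`, so every eigenvalue of `R̃^y_e` is at least `σ² - D`. Conversely, the span
of any `s + 1` eigenvectors of `R̃^y_e` meets the kernel of `R^y` (of codimension `≤ s`) in a unit
vector `v`, on which the Rayleigh quotient of `R^y_e` is exactly `σ²`; hence one of those eigenvalues
is at most `σ² + D`, and so `λ_l(R̃^y_e) ≤ σ² + D` for `l ≥ s`. The noise estimate `σ̂²` averages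
these tail eigenvalues, so `|σ² - σ̂²| ≤ D`, and the first inequality is the triangle inequality for
`R^y - R̂^y = (R^y_e - R̃^y_e) - (σ² - σ̂²) I`.
-/

open RCLike Module
open scoped InnerProductSpace

section Operator

variable {𝕜 E ι : Type*} [RCLike 𝕜] [NormedAddCommGroup E] [InnerProductSpace 𝕜 E] [Fintype ι]

theorem re_inner_apply_sub_le (S T : E →L[𝕜] E) (v : E) :
    re ⟪v, S v⟫_𝕜 - re ⟪v, T v⟫_𝕜 ≤ ‖S - T‖ * ‖v‖ ^ 2 :=
  calc re ⟪v, S v⟫_𝕜 - re ⟪v, T v⟫_𝕜 = re ⟪v, (S - T) v⟫_𝕜 := by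
        rw [_root_.sub_apply, inner_sub_right, map_sub]
    _ ≤ ‖v‖ * ‖(S - T) v‖ := re_inner_le_norm _ _
    _ ≤ ‖v‖ * (‖S - T‖ * ‖v‖) := by gcongr; exact (S - T).le_opNorm v
    _ = ‖S - T‖ * ‖v‖ ^ 2 := by ring

section Eigenbasis

variable {T : E →ₗ[𝕜] E} {b : OrthonormalBasis ι 𝕜 E} {μ : ι → ℝ}

theorem inner_apply_of_apply_eq_smul (hb : ∀ i, T (b i) = (μ i : 𝕜) • b i) (i : ι) (v : E) :
    ⟪b i, T v⟫_𝕜 = μ i * ⟪b i, v⟫_𝕜 := by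
  classical
  conv_lhs => rw [← b.sum_repr' v]
  simp only [map_sum, map_smul, hb, inner_sum, inner_smul_right, b.inner_eq_ite]
  simp [mul_comm]

theorem re_inner_apply_self_eq_sum (hb : ∀ i, T (b i) = (μ i : 𝕜) • b i) (v : E) :
    re ⟪v, T v⟫_𝕜 = ∑ i, μ i * ‖⟪b i, v⟫_𝕜‖ ^ 2 := by
  rw [← b.sum_inner_mul_inner, map_sum]
  refine Finset.sum_congr rfl fun i _ => ?_
  rw [inner_apply_of_apply_eq_smul hb, mul_left_comm, ← inner_conj_symm v (b i), RCLike.conj_mul,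
    ← RCLike.ofReal_pow, ← RCLike.ofReal_mul, RCLike.ofReal_re]

theorem mul_norm_sq_le_re_inner_apply_self (hb : ∀ i, T (b i) = (μ i : 𝕜) • b i) {a : ℝ} {v : E}
    (hv : ∀ i, ⟪b i, v⟫_𝕜 ≠ 0 → a ≤ μ i) : a * ‖v‖ ^ 2 ≤ re ⟪v, T v⟫_𝕜 := by
  rw [re_inner_apply_self_eq_sum hb, ← b.sum_sq_norm_inner_right, Finset.mul_sum]
  refine Finset.sum_le_sum fun i _ => ?_
  by_cases hi : ⟪b i, v⟫_𝕜 = 0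
  · simp [hi]
  · exact mul_le_mul_of_nonneg_right (hv i hi) (sq_nonneg _)

end Eigenbasis

theorem exists_ne_zero_apply_eq_zero_inner_eq_zero {F : Type*} [AddCommGroup F] [Module 𝕜 F]
    (f : E →ₗ[𝕜] F) (b : OrthonormalBasis ι 𝕜 E) {I : Finset ι}
    (hI : finrank 𝕜 (LinearMap.range f) < I.card) :
    ∃ v ≠ 0, f v = 0 ∧ ∀ i ∉ I, ⟪b i, v⟫_𝕜 = 0 := by
  classical
  have := b.toBasis.finiteDimensional_of_finite
  let g : E →ₗ[𝕜] LinearMap.range f × ({i // i ∉ I} → 𝕜) :=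
    f.rangeRestrict.prod (LinearMap.pi fun i => innerₛₗ 𝕜 (b i))
  have hg : finrank 𝕜 (LinearMap.range f × ({i // i ∉ I} → 𝕜)) < finrank 𝕜 E := by
    rw [finrank_prod, finrank_fintype_fun_eq_card, finrank_eq_card_basis b.toBasis,
      Fintype.card_subtype_compl, Fintype.card_coe]
    have := I.card_le_univ
    omega
  obtain ⟨v, hv, hv0⟩ := Submodule.ne_bot_iff _ |>.mp (LinearMap.ker_ne_bot_of_finrank_lt hg)
  have hgv : g v = 0 := hv
  refine ⟨v, hv0, ?_, fun i hi => ?_⟩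
  · simpa [g] using congrArg (Subtype.val ∘ Prod.fst) hgv
  · simpa [g] using congrFun (congrArg Prod.snd hgv) ⟨i, hi⟩

theorem sub_opNorm_le_of_apply_eq_smul {S T : E →L[𝕜] E} {c μ : ℝ}
    (hS : ∀ v, c * ‖v‖ ^ 2 ≤ re ⟪v, S v⟫_𝕜) {x : E} (hx : ‖x‖ = 1) (hTx : T x = (μ : 𝕜) • x) :
    c - ‖S - T‖ ≤ μ := by
  have hμ : re ⟪x, T x⟫_𝕜 = μ := by
    rw [hTx, inner_smul_right, inner_self_eq_norm_sq_to_K, hx]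
    simp
  have hST := re_inner_apply_sub_le S T x
  have hSx := hS x
  rw [hx, one_pow, mul_one] at hST hSx
  linarith

theorem exists_mem_le_add_opNorm_of_finrank_range_lt {F : Type*} [AddCommGroup F] [Module 𝕜 F]
    {S T : E →L[𝕜] E} {b : OrthonormalBasis ι 𝕜 E} {μ : ι → ℝ}
    (hb : ∀ i, T (b i) = (μ i : 𝕜) • b i) (f : E →ₗ[𝕜] F) {c : ℝ}
    (hS : ∀ v, f v = 0 → re ⟪v, S v⟫_𝕜 ≤ c * ‖v‖ ^ 2) {I : Finset ι}
    (hI : finrank 𝕜 (LinearMap.range f) < I.card) :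
    ∃ i ∈ I, μ i ≤ c + ‖S - T‖ := by
  obtain ⟨v, hv0, hfv, hvI⟩ := exists_ne_zero_apply_eq_zero_inner_eq_zero f b hI
  obtain ⟨i, hi, hmin⟩ := I.exists_min_image μ (Finset.card_pos.mp (by omega))
  refine ⟨i, hi, le_of_mul_le_mul_right ?_ (by positivity : 0 < ‖v‖ ^ 2)⟩
  have hT : μ i * ‖v‖ ^ 2 ≤ re ⟪v, T v⟫_𝕜 :=
    mul_norm_sq_le_re_inner_apply_self (T := (T : E →ₗ[𝕜] E)) hb
      fun j hj => hmin j (by_contra fun hjI => hj (hvI j hjI))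
  have := re_inner_apply_sub_le T S v
  rw [norm_sub_rev] at this
  linarith [hS v hfv]

end Operator

namespace Matrix

variable {𝕜 n : Type*} [RCLike 𝕜] [Fintype n] [DecidableEq n]

theorem IsHermitian.toEuclideanCLM_eigenvectorBasis {A : Matrix n n 𝕜} (hA : A.IsHermitian)
    (i : n) :
    toEuclideanCLM (𝕜 := 𝕜) A (hA.eigenvectorBasis i) =
      (hA.eigenvalues i : 𝕜) • hA.eigenvectorBasis i := by
  ext j
  have h := congrFun (hA.mulVec_eigenvectorBasis i) j
  rw [Pi.smul_apply, RCLike.real_smul_eq_coe_mul] at h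
  rw [PiLp.smul_apply, smul_eq_mul, ← h]
  rfl

theorem PosSemidef.re_inner_toEuclideanCLM_nonneg {P : Matrix n n 𝕜} (hP : P.PosSemidef)
    (v : EuclideanSpace 𝕜 n) : 0 ≤ re ⟪v, toEuclideanCLM (𝕜 := 𝕜) P v⟫_𝕜 :=
  (isPositive_toEuclideanLin_iff.mpr hP).re_inner_nonneg_right v

theorem re_inner_toEuclideanCLM_add_smul_one (P : Matrix n n 𝕜) (c : ℝ)
    (v : EuclideanSpace 𝕜 n) :
    re ⟪v, toEuclideanCLM (𝕜 := 𝕜) (P + (c : 𝕜) • 1) v⟫_𝕜 =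
      re ⟪v, toEuclideanCLM (𝕜 := 𝕜) P v⟫_𝕜 + c * ‖v‖ ^ 2 := by
  rw [map_add, map_smul, map_one, _root_.add_apply, _root_.smul_apply,
    one_apply_eq_self, inner_add_right,
    inner_smul_right, inner_self_eq_norm_sq_to_K, map_add, ← RCLike.ofReal_pow,
    ← RCLike.ofReal_mul, RCLike.ofReal_re]

theorem finrank_range_toEuclideanLin (P : Matrix n n 𝕜) :
    finrank 𝕜 (LinearMap.range (toEuclideanLin P)) = P.rank := by
  rw [rank_eq_finrank_range_toLin P (PiLp.basisFun 2 𝕜 n) (PiLp.basisFun 2 𝕜 n),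
    ← toLpLin_eq_toLin]

theorem IsHermitian.sub_norm_le_eigenvalues {A P : Matrix n n 𝕜} (hA : A.IsHermitian)
    (hP : P.PosSemidef) (c : ℝ) (i : n) :
    c - ‖toEuclideanCLM (n := n) (𝕜 := 𝕜) (P + (c : 𝕜) • 1 - A)‖ ≤ hA.eigenvalues i := by
  rw [map_sub]
  refine sub_opNorm_le_of_apply_eq_smul (fun v => ?_) (hA.eigenvectorBasis.orthonormal.1 i)
    (hA.toEuclideanCLM_eigenvectorBasis i)
  rw [re_inner_toEuclideanCLM_add_smul_one]
  linarith [hP.re_inner_toEuclideanCLM_nonneg v]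

theorem IsHermitian.exists_eigenvalues_le_add_norm {A : Matrix n n 𝕜} (hA : A.IsHermitian)
    (P : Matrix n n 𝕜) (c : ℝ) {I : Finset n} (hI : P.rank < I.card) :
    ∃ i ∈ I, hA.eigenvalues i ≤ c + ‖toEuclideanCLM (n := n) (𝕜 := 𝕜) (P + (c : 𝕜) • 1 - A)‖ := by
  rw [map_sub]
  refine exists_mem_le_add_opNorm_of_finrank_range_lt hA.toEuclideanCLM_eigenvectorBasis
    (toEuclideanLin P) (fun v hv => ?_) (by rwa [finrank_range_toEuclideanLin])
  rw [re_inner_toEuclideanCLM_add_smul_one]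
  have hPv : toEuclideanCLM (𝕜 := 𝕜) P v = 0 := hv
  simp [hPv]

end Matrix

theorem Antitone.apply_le_of_forall_card_lt_exists_le {N s : ℕ} (hs : s < N) {lam : Fin N → ℝ}
    (hanti : Antitone lam) {ι : Type*} {μ : ι → ℝ} (e : Fin N ≃ ι) (he : ∀ l, lam l = μ (e l))
    {M : ℝ} (hμ : ∀ I : Finset ι, s < I.card → ∃ i ∈ I, μ i ≤ M) {l : Fin N} (hl : s ≤ l) :
    lam l ≤ M := by
  obtain ⟨i, hi, hiM⟩ := hμ ((Finset.Iic ⟨s, hs⟩).map e.toEmbedding) (by simp)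
  obtain ⟨k, hk, rfl⟩ := Finset.mem_map.mp hi
  calc lam l ≤ lam k := hanti ((Finset.mem_Iic.mp hk).trans (Fin.le_def.mpr hl))
    _ = μ (e k) := he k
    _ ≤ M := hiM

theorem abs_sub_average_le {ι : Type*} {I : Finset ι} (hI : I.Nonempty) {f : ι → ℝ} {c D : ℝ}
    (h : ∀ i ∈ I, |f i - c| ≤ D) : |c - 1 / I.card * ∑ i ∈ I, f i| ≤ D := by
  have hcard : (0 : ℝ) < I.card := by exact_mod_cast hI.card_pos
  have hmean : c - 1 / I.card * ∑ i ∈ I, f i = (∑ i ∈ I, (c - f i)) / I.card := by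
    rw [Finset.sum_sub_distrib, Finset.sum_const, nsmul_eq_mul]
    field_simp
  rw [hmean, abs_div, Nat.abs_cast, div_le_iff₀ hcard]
  calc |∑ i ∈ I, (c - f i)| ≤ ∑ i ∈ I, |c - f i| := Finset.abs_sum_le_sum_abs _ _
    _ ≤ ∑ _i ∈ I, D := Finset.sum_le_sum fun i hi => abs_sub_comm (f i) c ▸ h i hi
    _ = D * I.card := by rw [Finset.sum_const, nsmul_eq_mul, mul_comm]

theorem specNorm_sub_smul_one_le {N : ℕ} (A : Matrix (Fin N) (Fin N) ℂ) (c : ℝ) :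
    specNorm (A - (c : ℂ) • 1) ≤ specNorm A + |c| := by
  have hc : ‖(c : ℂ) • (1 : EuclideanSpace ℂ (Fin N) →L[ℂ] EuclideanSpace ℂ (Fin N))‖ ≤ |c| :=
    calc _ ≤ ‖(c : ℂ)‖ * ‖(1 : EuclideanSpace ℂ (Fin N) →L[ℂ] EuclideanSpace ℂ (Fin N))‖ :=
          norm_smul_le _ _
      _ ≤ |c| * 1 := by
          rw [Complex.norm_real, Real.norm_eq_abs]
          gcongr
          exact ContinuousLinearMap.norm_id_le
      _ = |c| := mul_one _
  unfold specNorm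
  rw [map_sub, map_smul, map_one]
  exact (norm_sub_le _ _).trans (by gcongr)

theorem stmt15_general {N s : ℕ} (hs : s < N)
    (Rye Rtye Ry : Matrix (Fin N) (Fin N) ℂ) (σsq : ℝ)
    (hRy : Ry.PosSemidef) (hrank : Ry.rank ≤ s)
    (hRye : Rye = Ry + (σsq : ℂ) • (1 : Matrix (Fin N) (Fin N) ℂ))
    (hTil : Rtye.IsHermitian)
    (lam : Fin N → ℝ) (hanti : Antitone lam)
    (hperm : ∃ e : Equiv.Perm (Fin N), ∀ l, lam l = hTil.eigenvalues (e l))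
    (σhsq : ℝ)
    (hσh : σhsq = (1 / ((N : ℝ) - s)) * ∑ l ∈ Finset.univ.filter (fun l : Fin N => s ≤ (l : ℕ)), lam l)
    (Rh : Matrix (Fin N) (Fin N) ℂ)
    (hRh : Rh = Rtye - (σhsq : ℂ) • (1 : Matrix (Fin N) (Fin N) ℂ)) :
    specNorm (Ry - Rh) ≤ specNorm (Rye - Rtye) + |σsq - σhsq| ∧
    specNorm (Rye - Rtye) + |σsq - σhsq| ≤ 2 * specNorm (Rye - Rtye) := by
  obtain ⟨e, he⟩ := hperm
  subst hRye hRh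
  set D := specNorm (Ry + (σsq : ℂ) • 1 - Rtye)
  have hlow : ∀ l, σsq - D ≤ lam l := fun l =>
    he l ▸ hTil.sub_norm_le_eigenvalues hRy σsq (e l)
  have hupp : ∀ l : Fin N, s ≤ (l : ℕ) → lam l ≤ σsq + D := fun l hl =>
    hanti.apply_le_of_forall_card_lt_exists_le hs e he
      (fun _ hI => hTil.exists_eigenvalues_le_add_norm Ry σsq (by omega)) hl
  have htail : Finset.univ.filter (fun l : Fin N => s ≤ (l : ℕ)) = Finset.Ici ⟨s, hs⟩ := by
    ext
    simp [Fin.le_def]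
  have hcard : ((Finset.Ici (⟨s, hs⟩ : Fin N)).card : ℝ) = N - s := by
    rw [Fin.card_Ici, Nat.cast_sub hs.le]
  have hnoise : |σsq - σhsq| ≤ D := by
    rw [hσh, htail, ← hcard]
    exact abs_sub_average_le Finset.nonempty_Ici fun l hl => abs_le.mpr
      ⟨by linarith [hlow l], by linarith [hupp l (Fin.le_def.mp (Finset.mem_Ici.mp hl))]⟩
  have hmat : Ry - (Rtye - (σhsq : ℂ) • 1) =
      Ry + (σsq : ℂ) • 1 - Rtye - ((σsq - σhsq : ℝ) : ℂ) • 1 := by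
    push_cast
    module
  exact ⟨hmat ▸ specNorm_sub_smul_one_le _ _, by linarith⟩

theorem stmt15 {N s : ℕ} (hs : s < N)
    (Rye Rtye Ry : Matrix (Fin N) (Fin N) ℂ) (σsq : ℝ) (hσ : 0 < σsq)
    (hRy : Ry.PosSemidef) (hrank : Ry.rank ≤ s)
    (hRye : Rye = Ry + (σsq : ℂ) • (1 : Matrix (Fin N) (Fin N) ℂ))
    (hTil : Rtye.IsHermitian)
    (lam : Fin N → ℝ) (hanti : Antitone lam)
    (hperm : ∃ e : Equiv.Perm (Fin N), ∀ l, lam l = hTil.eigenvalues (e l))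
    (σhsq : ℝ)
    (hσh : σhsq = (1 / ((N : ℝ) - s)) * ∑ l ∈ Finset.univ.filter (fun l : Fin N => s ≤ (l : ℕ)), lam l)
    (Rh : Matrix (Fin N) (Fin N) ℂ)
    (hRh : Rh = Rtye - (σhsq : ℂ) • (1 : Matrix (Fin N) (Fin N) ℂ)) :
    specNorm (Ry - Rh) ≤ specNorm (Rye - Rtye) + |σsq - σhsq| ∧
    specNorm (Rye - Rtye) + |σsq - σhsq| ≤ 2 * specNorm (Rye - Rtye) :=
  stmt15_general hs Rye Rtye Ry σsq hRy hrank hRye hTil lam hanti hperm σhsq hσh Rh hRh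
end

section
/- Let g ∈ ℂ^N have all entries nonzero, with α_min = min_n |g_n|. Let ĝ ∈ ℂ^N satisfy ‖g − ĝ‖_∞ ≤ α_min/2. Let R, R̂ ∈ ℂ^{N×N}. Then ‖diag(ĝ)^{-1} R̂ diag(conj(ĝ))^{-1} − diag(g)^{-1} R diag(conj(g))^{-1}‖ ≤ (4/α_min²)‖R − R̂‖ + (12 ‖R‖ / α_min³) ‖g − ĝ‖_∞, where ‖·‖ is the spectral norm and ‖·‖_∞ the entrywise max norm on ℂ^N. -/
/-!
Write `A = diag(g)⁻¹` and `B = diag(ĝ)⁻¹`; the conjugated diagonals invert to `A*` and `B*`. The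
difference `B R̂ B* - A R A*` splits as `B (R̂ - R) B* + (B - A) R B* + A R (B - A)*`, and each
factor is a diagonal matrix whose spectral norm is the largest modulus of its entries:
`‖A‖ ≤ 1/α`, `‖B‖ ≤ 2/α` since `|ĝ_n| ≥ α/2`, and `‖B - A‖ ≤ 2‖g - ĝ‖_∞/α²`.
-/

open Complex Matrix

theorem norm_mul_mul_star_sub_mul_mul_star_le {E : Type*} [NonUnitalNormedRing E] [StarRing E]
    [NormedStarGroup E] (a b r s : E) :
    ‖b * s * star b - a * r * star a‖ ≤
      ‖b‖ ^ 2 * ‖s - r‖ + (‖a‖ + ‖b‖) * ‖r‖ * ‖b - a‖ := by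
  have hdecomp : b * s * star b - a * r * star a =
      b * (s - r) * star b + (b - a) * r * star b + a * r * star (b - a) := by
    rw [star_sub]; noncomm_ring
  rw [hdecomp]
  calc _ ≤ ‖b * (s - r) * star b‖ + ‖(b - a) * r * star b‖ + ‖a * r * star (b - a)‖ :=
        norm_add₃_le
    _ ≤ ‖b‖ * ‖s - r‖ * ‖b‖ + ‖b - a‖ * ‖r‖ * ‖b‖ + ‖a‖ * ‖r‖ * ‖b - a‖ := by
        gcongr <;> refine (norm_mul_le _ _).trans ?_ <;> rw [norm_star] <;> gcongr <;>
          exact norm_mul_le _ _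
    _ = _ := by ring

theorem half_le_norm_of_norm_sub_le_half {E : Type*} [SeminormedAddCommGroup E] {z w : E} {α : ℝ}
    (hz : α ≤ ‖z‖) (hzw : ‖z - w‖ ≤ α / 2) : α / 2 ≤ ‖w‖ := by
  have := norm_sub_norm_le z w
  linarith

theorem norm_inv_sub_inv_le {𝕜 : Type*} [NormedField 𝕜] {z w : 𝕜} {α : ℝ} (hα : 0 < α)
    (hz : α ≤ ‖z‖) (hw : α / 2 ≤ ‖w‖) : ‖w⁻¹ - z⁻¹‖ ≤ 2 * ‖z - w‖ / α ^ 2 := by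
  have hz0 : 0 < ‖z‖ := hα.trans_le hz
  have hw0 : 0 < ‖w‖ := by linarith
  rw [inv_sub_inv (norm_pos_iff.1 hw0) (norm_pos_iff.1 hz0), norm_div, norm_mul]
  calc ‖z - w‖ / (‖w‖ * ‖z‖) ≤ ‖z - w‖ / (α / 2 * α) := by gcongr
    _ = 2 * ‖z - w‖ / α ^ 2 := by field_simp

namespace Matrix

theorem inv_diagonal_starRingEnd {n α : Type*} [Fintype n] [DecidableEq n] [CommRing α]
    [StarRing α] (v : n → α) :
    (diagonal fun i => starRingEnd α (v i))⁻¹ = star (diagonal v)⁻¹ := by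
  rw [star_eq_conjTranspose, conjTranspose_nonsing_inv, diagonal_conjTranspose]
  rfl

theorem inv_diagonal_of_ne_zero {n K : Type*} [Fintype n] [DecidableEq n] [Field K] {v : n → K}
    (hv : ∀ i, v i ≠ 0) : (diagonal v)⁻¹ = diagonal fun i => (v i)⁻¹ := by
  refine inv_eq_right_inv ?_
  rw [diagonal_mul_diagonal, ← diagonal_one]
  exact congrArg diagonal (funext fun i => mul_inv_cancel₀ (hv i))

open scoped Matrix.Norms.L2Operator

variable {n 𝕜 : Type*} [Fintype n] [DecidableEq n] [RCLike 𝕜]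

theorem l2_opNorm_diagonal_le {v : n → 𝕜} {c : ℝ} (hc : 0 ≤ c) (hv : ∀ i, ‖v i‖ ≤ c) :
    ‖diagonal v‖ ≤ c := by
  rw [l2_opNorm_diagonal]
  exact (pi_norm_le_iff_of_nonneg hc).2 hv

theorem l2_opNorm_inv_diagonal_le {v : n → 𝕜} {β : ℝ} (hβ : 0 < β) (hv : ∀ i, β ≤ ‖v i‖) :
    ‖(diagonal v)⁻¹‖ ≤ β⁻¹ := by
  rw [inv_diagonal_of_ne_zero fun i => norm_pos_iff.1 (hβ.trans_le (hv i))]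
  refine l2_opNorm_diagonal_le (by positivity) fun i => ?_
  rw [norm_inv]
  exact inv_anti₀ hβ (hv i)

theorem l2_opNorm_inv_diagonal_sub_inv_diagonal_le [Nonempty n] {v w : n → 𝕜} {α ε : ℝ} (hα : 0 < α)
    (hv : ∀ i, α ≤ ‖v i‖) (hw : ∀ i, α / 2 ≤ ‖w i‖) (hvw : ∀ i, ‖v i - w i‖ ≤ ε) :
    ‖(diagonal w)⁻¹ - (diagonal v)⁻¹‖ ≤ 2 * ε / α ^ 2 := by
  have hε : 0 ≤ ε := (norm_nonneg _).trans (hvw (Classical.arbitrary n))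
  rw [inv_diagonal_of_ne_zero fun i => norm_pos_iff.1 (hα.trans_le (hv i)),
    inv_diagonal_of_ne_zero fun i => norm_pos_iff.1 ((half_pos hα).trans_le (hw i)),
    diagonal_sub]
  refine l2_opNorm_diagonal_le (by positivity) fun i => ?_
  exact (norm_inv_sub_inv_le hα (hv i) (hw i)).trans (by gcongr; exact hvw i)

end Matrix

open scoped Matrix.Norms.L2Operator in
theorem specNorm_eq_norm {N : ℕ} (M : Matrix (Fin N) (Fin N) ℂ) : specNorm M = ‖M‖ := rfl

open scoped Matrix.Norms.L2Operator in
theorem stmt16 {N : ℕ} (hN : 0 < N) (g gh : Fin N → ℂ)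
    (hg : ∀ n, g n ≠ 0)
    (αmin : ℝ) (hαmin : αmin = ⨅ n, ‖g n‖)
    (hclose : ∀ n, ‖g n - gh n‖ ≤ αmin / 2)
    (R Rh : Matrix (Fin N) (Fin N) ℂ) :
    specNorm
        ((Matrix.diagonal gh)⁻¹ * Rh * (Matrix.diagonal (fun n => starRingEnd ℂ (gh n)))⁻¹ -
          (Matrix.diagonal g)⁻¹ * R * (Matrix.diagonal (fun n => starRingEnd ℂ (g n)))⁻¹) ≤
      (4 / αmin^2) * specNorm (R - Rh) +
        (12 * specNorm R / αmin^3) * (⨆ n, ‖g n - gh n‖) := by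
  have : Nonempty (Fin N) := ⟨⟨0, hN⟩⟩
  set ε := ⨆ n, ‖g n - gh n‖
  have hε : ∀ n, ‖g n - gh n‖ ≤ ε := le_ciSup (Finite.bddAbove_range _)
  have hε0 : 0 ≤ ε := (norm_nonneg _).trans (hε ⟨0, hN⟩)
  have hgα : ∀ n, αmin ≤ ‖g n‖ := fun n => hαmin ▸ ciInf_le (Finite.bddBelow_range _) n
  have hα : 0 < αmin := by
    obtain ⟨n, hn⟩ := exists_eq_ciInf_of_finite (f := fun n => ‖g n‖)
    exact hαmin ▸ hn ▸ norm_pos_iff.2 (hg n)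
  have hghα : ∀ n, αmin / 2 ≤ ‖gh n‖ := fun n =>
    half_le_norm_of_norm_sub_le_half (hgα n) (hclose n)
  have hA : ‖(diagonal g)⁻¹‖ ≤ αmin⁻¹ := l2_opNorm_inv_diagonal_le hα hgα
  have hB : ‖(diagonal gh)⁻¹‖ ≤ (αmin / 2)⁻¹ := l2_opNorm_inv_diagonal_le (by positivity) hghα
  have hBA : ‖(diagonal gh)⁻¹ - (diagonal g)⁻¹‖ ≤ 2 * ε / αmin ^ 2 :=
    l2_opNorm_inv_diagonal_sub_inv_diagonal_le hα hgα hghα hε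
  simp only [specNorm_eq_norm, inv_diagonal_starRingEnd]
  calc _ ≤ _ := norm_mul_mul_star_sub_mul_mul_star_le _ _ _ _
    _ ≤ (αmin / 2)⁻¹ ^ 2 * ‖R - Rh‖ + (αmin⁻¹ + (αmin / 2)⁻¹) * ‖R‖ * (2 * ε / αmin ^ 2) := by
        rw [norm_sub_rev Rh R]
        gcongr
    _ = 4 / αmin ^ 2 * ‖R - Rh‖ + 6 * ‖R‖ / αmin ^ 3 * ε := by field_simp; ring
    _ ≤ _ := by gcongr; norm_num
end

section
/- Let Ta: ℂ^{N×N} → ℂ^N be the map with (Ta(X))_k = ∑ diag(X, k) + ∑ diag(conj(X), −k) for k = 0, …, N−1, where diag(X, k) denotes the k-th superdiagonal (sub-diagonal for negative k) of X and ∑ sums its entries. Then for any g₁, g₂ ∈ ℂ^N and X ∈ ℂ^{N×N}: ‖Ta(diag(g₁) X diag(g₂))‖ ≤ 2 ‖g₁‖ ‖g₂‖ ‖X‖_F. -/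
open Complex Matrix

/-- Frobenius norm of a matrix. -/
noncomputable def frobNorm {N : ℕ} (M : Matrix (Fin N) (Fin N) ℂ) : ℝ :=
  Real.sqrt (∑ m : Fin N, ∑ n : Fin N, ‖M m n‖^2)

/-- The operator `Ta` summing the `k`-th superdiagonal of `X` and the `k`-th
subdiagonal of the conjugate of `X`. -/
noncomputable def Ta {N : ℕ} (X : Matrix (Fin N) (Fin N) ℂ) : Fin N → ℂ :=
  fun k => ∑ n : Fin N,
    if h : (n : ℕ) + (k : ℕ) < N then
      X n ⟨(n : ℕ) + k, h⟩ + starRingEnd ℂ (X ⟨(n : ℕ) + k, h⟩ n)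
    else 0

/-!
Writing `Y = diag(g₁) X diag(g₂)`, one has `Ta Y = S (Y + Yᴴ)`, where `S A` is the vector of the
superdiagonal sums of `A`, and `Yᴴ = diag(ḡ₂) Xᴴ diag(ḡ₁)` has the same shape. So it suffices to
bound `‖S (diag(g₁) X diag(g₂))‖` by `‖g₁‖ ‖g₂‖ ‖X‖_F`. Cauchy–Schwarz along the `k`-th
superdiagonal bounds its `k`-th entry by `‖g₁‖ ‖g₂‖ √D_k`, where `D_k` is the squared mass of `X`
on that superdiagonal, and distinct superdiagonals are disjoint, so `∑ₖ D_k ≤ ‖X‖_F²`.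
-/

section Superdiagonal

variable {N : ℕ} {M : Type*}

def superdiagSum [AddCommMonoid M] (A : Matrix (Fin N) (Fin N) M) (k : Fin N) : M :=
  ∑ n : Fin N, if h : (n : ℕ) + k < N then A n ⟨n + k, h⟩ else 0

lemma superdiagSum_add [AddCommMonoid M] (A B : Matrix (Fin N) (Fin N) M) :
    superdiagSum (A + B) = superdiagSum A + superdiagSum B := by
  ext k
  simp only [superdiagSum, Pi.add_apply, ← Finset.sum_add_distrib]
  refine Finset.sum_congr rfl fun n _ => ?_
  split_ifs <;> simp

lemma Ta_eq_superdiagSum (X : Matrix (Fin N) (Fin N) ℂ) : Ta X = superdiagSum (X + Xᴴ) :=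
  rfl

section Ordered

variable [AddCommMonoid M] [PartialOrder M] [IsOrderedAddMonoid M]

lemma superdiagSum_nonneg {A : Matrix (Fin N) (Fin N) M} (hA : ∀ i j, 0 ≤ A i j) (k : Fin N) :
    0 ≤ superdiagSum A k :=
  Finset.sum_nonneg fun n _ => by split_ifs <;> simp [hA]

/-- Distinct superdiagonals are disjoint. -/
lemma sum_superdiagSum_le {A : Matrix (Fin N) (Fin N) M} (hA : ∀ i j, 0 ≤ A i j) :
    ∑ k, superdiagSum A k ≤ ∑ i, ∑ j, A i j := by
  simp only [superdiagSum]
  rw [Finset.sum_comm]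
  refine Finset.sum_le_sum fun n _ => ?_
  have : NeZero N := NeZero.of_pos n.pos
  -- on row `n`, the `k`-th superdiagonal entry sits in column `k + n` (computed mod `N`)
  calc ∑ k : Fin N, (if h : (n : ℕ) + k < N then A n ⟨n + k, h⟩ else 0)
      ≤ ∑ k : Fin N, A n (k + n) := Finset.sum_le_sum fun k _ => by
        split_ifs with h
        · exact le_of_eq (congrArg (A n) (Fin.ext (by simp [Fin.val_add, Nat.mod_eq_of_lt, h,
            add_comm])))
        · exact hA _ _
    _ = ∑ m, A n m := Fintype.sum_equiv (Equiv.addRight n) _ _ fun _ => rfl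

lemma superdiagSum_le_sum {A : Matrix (Fin N) (Fin N) M} (hA : ∀ i j, 0 ≤ A i j) (k : Fin N) :
    superdiagSum A k ≤ ∑ i, ∑ j, A i j :=
  (Finset.single_le_sum (fun k _ => superdiagSum_nonneg hA k) (Finset.mem_univ k)).trans
    (sum_superdiagSum_le hA)

end Ordered

lemma norm_superdiagSum_le (A : Matrix (Fin N) (Fin N) ℂ) (k : Fin N) :
    ‖superdiagSum A k‖ ≤ superdiagSum (fun i j => ‖A i j‖) k :=
  (norm_sum_le _ _).trans (Finset.sum_le_sum fun n _ => by split_ifs <;> simp)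

lemma superdiagSum_hadamard_le (A B : Matrix (Fin N) (Fin N) ℝ) (k : Fin N) :
    superdiagSum (A ⊙ B) k ≤
      √(superdiagSum (fun i j => A i j ^ 2) k) * √(superdiagSum (fun i j => B i j ^ 2) k) := by
  convert Real.sum_mul_le_sqrt_mul_sqrt Finset.univ
    (fun n : Fin N => if h : (n : ℕ) + k < N then A n ⟨n + k, h⟩ else 0)
    (fun n : Fin N => if h : (n : ℕ) + k < N then B n ⟨n + k, h⟩ else 0) using 3 <;>
  · refine Finset.sum_congr rfl fun n _ => ?_
    split_ifs <;> simp [sq]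

end Superdiagonal

section Norms

variable {N : ℕ}

lemma evNorm_add_le (u v : Fin N → ℂ) : evNorm (u + v) ≤ evNorm u + evNorm v := by
  have h : ∀ w : Fin N → ℂ, evNorm w = ‖(WithLp.toLp 2 w : EuclideanSpace ℂ (Fin N))‖ :=
    fun w => (EuclideanSpace.norm_eq _).symm
  simpa only [h, WithLp.toLp_add] using norm_add_le _ _

lemma evNorm_star (v : Fin N → ℂ) : evNorm (star v) = evNorm v := by
  simp [evNorm]

lemma frobNorm_conjTranspose (X : Matrix (Fin N) (Fin N) ℂ) : frobNorm Xᴴ = frobNorm X := by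
  simp only [frobNorm, conjTranspose_apply, norm_star]
  rw [Finset.sum_comm]

lemma evNorm_mul_evNorm (u v : Fin N → ℂ) :
    evNorm u * evNorm v = √(∑ i, ∑ j, (‖u i‖ * ‖v j‖) ^ 2) := by
  simp only [evNorm, mul_pow, ← Finset.sum_mul_sum]
  exact (Real.sqrt_mul (Finset.sum_nonneg fun i _ => sq_nonneg _) _).symm

lemma evNorm_le_mul_sqrt_sum {v : Fin N → ℂ} {c : ℝ} {d : Fin N → ℝ} (hc : 0 ≤ c)
    (hd : ∀ k, 0 ≤ d k) (hv : ∀ k, ‖v k‖ ≤ c * √(d k)) : evNorm v ≤ c * √(∑ k, d k) := by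
  calc evNorm v ≤ √(∑ k, (c * √(d k)) ^ 2) :=
        Real.sqrt_le_sqrt (Finset.sum_le_sum fun k _ => pow_le_pow_left₀ (norm_nonneg _) (hv k) 2)
    _ = c * √(∑ k, d k) := by
        simp only [mul_pow, Real.sq_sqrt (hd _), ← Finset.mul_sum]
        rw [Real.sqrt_mul (sq_nonneg c), Real.sqrt_sq hc]

end Norms

lemma evNorm_superdiagSum_diagonal_mul_mul_diagonal_le {N : ℕ} (g₁ g₂ : Fin N → ℂ)
    (X : Matrix (Fin N) (Fin N) ℂ) :
    evNorm (superdiagSum (diagonal g₁ * X * diagonal g₂)) ≤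
      evNorm g₁ * evNorm g₂ * frobNorm X := by
  set G : Matrix (Fin N) (Fin N) ℝ := fun i j => ‖g₁ i‖ * ‖g₂ j‖
  set D : Matrix (Fin N) (Fin N) ℝ := fun i j => ‖X i j‖ ^ 2
  have hG : ∀ k, √(superdiagSum (fun i j => G i j ^ 2) k) ≤ evNorm g₁ * evNorm g₂ := fun k => by
    rw [evNorm_mul_evNorm]
    exact Real.sqrt_le_sqrt (superdiagSum_le_sum (fun _ _ => sq_nonneg _) k)
  have hentry : ∀ k, ‖superdiagSum (diagonal g₁ * X * diagonal g₂) k‖ ≤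
      evNorm g₁ * evNorm g₂ * √(superdiagSum D k) := fun k => by
    have hnorm : (fun i j => ‖(diagonal g₁ * X * diagonal g₂) i j‖ : Matrix (Fin N) (Fin N) ℝ) =
        G ⊙ fun i j => ‖X i j‖ := by
      funext i j
      show _ = G i j * ‖X i j‖
      rw [mul_diagonal, diagonal_mul, norm_mul, norm_mul, mul_right_comm]
    calc ‖superdiagSum (diagonal g₁ * X * diagonal g₂) k‖
        ≤ superdiagSum (G ⊙ fun i j => ‖X i j‖) k := hnorm ▸ norm_superdiagSum_le _ k
      _ ≤ √(superdiagSum (fun i j => G i j ^ 2) k) * √(superdiagSum D k) :=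
          superdiagSum_hadamard_le _ _ k
      _ ≤ evNorm g₁ * evNorm g₂ * √(superdiagSum D k) :=
          mul_le_mul_of_nonneg_right (hG k) (Real.sqrt_nonneg _)
  have hG₀ : 0 ≤ evNorm g₁ * evNorm g₂ := by unfold evNorm; positivity
  calc evNorm (superdiagSum (diagonal g₁ * X * diagonal g₂))
      ≤ evNorm g₁ * evNorm g₂ * √(∑ k, superdiagSum D k) :=
        evNorm_le_mul_sqrt_sum hG₀ (superdiagSum_nonneg fun _ _ => sq_nonneg _) hentry
    _ ≤ evNorm g₁ * evNorm g₂ * frobNorm X :=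
        mul_le_mul_of_nonneg_left
          (Real.sqrt_le_sqrt (sum_superdiagSum_le fun _ _ => sq_nonneg _)) hG₀

theorem stmt18 {N : ℕ} (g₁ g₂ : Fin N → ℂ) (X : Matrix (Fin N) (Fin N) ℂ) :
    evNorm (Ta (Matrix.diagonal g₁ * X * Matrix.diagonal g₂)) ≤
      2 * evNorm g₁ * evNorm g₂ * frobNorm X := by
  have hconj : (diagonal g₁ * X * diagonal g₂)ᴴ = diagonal (star g₂) * Xᴴ * diagonal (star g₁) := by
    simp only [conjTranspose_mul, diagonal_conjTranspose, Matrix.mul_assoc]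
  calc evNorm (Ta (diagonal g₁ * X * diagonal g₂))
      = evNorm (superdiagSum (diagonal g₁ * X * diagonal g₂) +
          superdiagSum (diagonal (star g₂) * Xᴴ * diagonal (star g₁))) := by
        rw [Ta_eq_superdiagSum, superdiagSum_add, hconj]
    _ ≤ evNorm g₁ * evNorm g₂ * frobNorm X + evNorm (star g₂) * evNorm (star g₁) * frobNorm Xᴴ :=
        (evNorm_add_le _ _).trans (add_le_add
          (evNorm_superdiagSum_diagonal_mul_mul_diagonal_le _ _ _)
          (evNorm_superdiagSum_diagonal_mul_mul_diagonal_le _ _ _))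
    _ = 2 * evNorm g₁ * evNorm g₂ * frobNorm X := by
        rw [evNorm_star, evNorm_star, frobNorm_conjTranspose]
        ring
end
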